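/- arXiv:1711.03011 — 5 statements merged into one kernel-verified Lean document; each statement's English description precedes it below -/
import Mathlib

section
/- Let g : (0,1) → ℝ be nondecreasing and càdlàg, and h ∈ L²(0,1). Define h_g(u) to equal the average of h over I (i.e., (1/leb(I)) ∫_I h) whenever u belongs to an interval I = g⁻¹({g(u)}) of positive Lebesgue measure, and h_g(u) = h(u) otherwise. Then h_g equals almost everywhere the orthogonal projection of h onto the closed subspace L₂(g) of L²(0,1) consisting of (completed) σ(g)-measurable square-integrable functions. -/
/-!
Let `C` be the countable set of values `c` whose level set `g⁻¹{c}` has positive measure. On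
each such atom the projection must be constant, hence equal to the average of `h` there; off
the atoms, a monotone `g` is injective, so by the Lusin–Souslin theorem `σ(g)` sees every Borel
set there and the projection leaves `h` unchanged. Both claims are checked through the
set-integral characterisation of the conditional expectation, integrating fibre by fibre over
the countably many atoms.
-/

open MeasureTheory Set

noncomputable section

/-- Lebesgue measure restricted to `(0,1)`. -/
def mu01 : Measure ℝ := volume.restrict (Set.Ioo (0:ℝ) 1)

/-- The level set of `g` through `u`, inside `(0,1)`. -/
def levelSet (g : ℝ → ℝ) (u : ℝ) : Set ℝ := {v ∈ Set.Ioo (0:ℝ) 1 | g v = g u}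

open Classical in
/-- The explicit candidate `h_g` for the projection: average of `h` over the level
interval of `g` through `u` when that interval has positive measure, `h u` otherwise. -/
def projFun (g h : ℝ → ℝ) (u : ℝ) : ℝ :=
  if 0 < volume (levelSet g u) then
    (∫ v in levelSet g u, h v) / (volume (levelSet g u)).toReal
  else h u

lemma preimage_eq_iUnion_preimage_singleton {α β : Type*} (f : α → β) (S : Set β) :
    f ⁻¹' S = ⋃ c : S, f ⁻¹' {(c : β)} := by
  ext x
  simp

lemma exists_measurable_comp_eqOn_of_injOn {α β γ : Type*} [MeasurableSpace α]
    [StandardBorelSpace α] [MeasurableSpace β] [MeasurableSpace.CountablySeparated β]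
    [MeasurableSpace γ] [Nonempty γ]
    {f : α → β} (hf : Measurable f) {s : Set α} (hs : MeasurableSet s) (hinj : InjOn f s)
    {h : α → γ} (hh : Measurable h) : ∃ ψ : β → γ, Measurable ψ ∧ EqOn h (ψ ∘ f) s := by
  have := hs.standardBorel
  have hemb : MeasurableEmbedding fun x : s => f x :=
    (hf.comp measurable_subtype_coe).measurableEmbedding hinj.injective
  obtain ⟨ψ, hψ, hcomp⟩ :=
    hemb.exists_measurable_extend (hh.comp measurable_subtype_coe) fun _ => inferInstance
  exact ⟨ψ, hψ, fun x hx => (congrFun hcomp ⟨x, hx⟩).symm⟩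

variable {α β : Type*} [MeasurableSpace α]

open Classical in
def fiberAverage (μ : Measure α) (f : α → β) (h : α → ℝ) (x : α) : ℝ :=
  if 0 < μ (f ⁻¹' {f x}) then ⨍ y in f ⁻¹' {f x}, h y ∂μ else h x

section FiberAverage

variable {μ : Measure α} {f : α → β} {h : α → ℝ}

lemma fiberAverage_of_not_pos {x : α} (hx : ¬ 0 < μ (f ⁻¹' {f x})) :
    fiberAverage μ f h x = h x :=
  if_neg hx

lemma eqOn_fiberAverage_preimage_singleton {c : β} (hc : 0 < μ (f ⁻¹' {c})) :
    EqOn (fiberAverage μ f h) (fun _ => ⨍ y in f ⁻¹' {c}, h y ∂μ) (f ⁻¹' {c}) := by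
  rintro x rfl
  exact if_pos hc

variable [MeasurableSpace β] [MeasurableSingletonClass β]

lemma hasSum_setIntegral_preimage_singleton (hf : Measurable f) {S : Set β} (hS : S.Countable)
    {F : α → ℝ} (hF : IntegrableOn F (f ⁻¹' S) μ) :
    HasSum (fun c : S => ∫ x in f ⁻¹' {(c : β)}, F x ∂μ) (∫ x in f ⁻¹' S, F x ∂μ) := by
  have := hS.to_subtype
  rw [preimage_eq_iUnion_preimage_singleton] at hF ⊢
  exact hasSum_integral_iUnion (fun c => hf (measurableSet_singleton _))
    (fun c d hcd => (disjoint_singleton.2 (Subtype.coe_injective.ne hcd)).preimage f) hF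

variable [IsFiniteMeasure μ]

lemma setIntegral_fiberAverage_preimage_singleton (hf : Measurable f) (c : β) :
    ∫ x in f ⁻¹' {c}, fiberAverage μ f h x ∂μ = ∫ x in f ⁻¹' {c}, h x ∂μ := by
  rcases eq_zero_or_pos (μ (f ⁻¹' {c})) with hc | hc
  · simp [Measure.restrict_eq_zero.2 hc]
  · rw [setIntegral_congr_fun (hf (measurableSet_singleton c))
      (eqOn_fiberAverage_preimage_singleton hc), setIntegral_const,
      measure_smul_setAverage _ (measure_ne_top _ _)]

lemma integrableOn_fiberAverage_preimage_singleton (hf : Measurable f) (c : β) :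
    IntegrableOn (fiberAverage μ f h) (f ⁻¹' {c}) μ := by
  rcases eq_zero_or_pos (μ (f ⁻¹' {c})) with hc | hc
  · exact IntegrableOn.of_measure_zero hc
  · exact (integrableOn_const (measure_ne_top _ _)).congr_fun
      (eqOn_fiberAverage_preimage_singleton hc).symm (hf (measurableSet_singleton c))

lemma integral_norm_fiberAverage_preimage_singleton_le (hf : Measurable f) (c : β) :
    ∫ x in f ⁻¹' {c}, ‖fiberAverage μ f h x‖ ∂μ ≤ ∫ x in f ⁻¹' {c}, ‖h x‖ ∂μ := by
  rcases eq_zero_or_pos (μ (f ⁻¹' {c})) with hc | hc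
  · simp [Measure.restrict_eq_zero.2 hc]
  · calc ∫ x in f ⁻¹' {c}, ‖fiberAverage μ f h x‖ ∂μ
        = μ.real (f ⁻¹' {c}) • ‖⨍ y in f ⁻¹' {c}, h y ∂μ‖ := by
          rw [setIntegral_congr_fun (hf (measurableSet_singleton c))
            fun x hx => congrArg norm (eqOn_fiberAverage_preimage_singleton hc hx),
            setIntegral_const]
      _ = ‖∫ x in f ⁻¹' {c}, h x ∂μ‖ := by
          rw [← measure_smul_setAverage _ (measure_ne_top _ _), norm_smul,
            Real.norm_of_nonneg measureReal_nonneg, smul_eq_mul]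
      _ ≤ ∫ x in f ⁻¹' {c}, ‖h x‖ ∂μ := norm_integral_le_integral_norm _

lemma integrable_fiberAverage (hf : Measurable f) (hh : Integrable h μ) :
    Integrable (fiberAverage μ f h) μ := by
  set C := {c : β | 0 < μ (f ⁻¹' {c})}
  have hC : C.Countable := Measure.countable_meas_level_set_pos hf
  have := hC.to_subtype
  have hatoms : IntegrableOn (fiberAverage μ f h) (f ⁻¹' C) μ := by
    rw [preimage_eq_iUnion_preimage_singleton]
    refine integrableOn_iUnion_of_summable_integral_norm
      (fun c => integrableOn_fiberAverage_preimage_singleton hf c) ?_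
    exact (hasSum_setIntegral_preimage_singleton hf hC hh.norm.integrableOn).summable
      |>.of_nonneg_of_le (fun _ => setIntegral_nonneg_of_ae (ae_of_all _ fun _ => norm_nonneg _))
      (fun c => integral_norm_fiberAverage_preimage_singleton_le hf c)
  have hrest : IntegrableOn (fiberAverage μ f h) (f ⁻¹' Cᶜ) μ :=
    hh.integrableOn.congr_fun (fun x hx => (fiberAverage_of_not_pos hx).symm)
      (hf hC.measurableSet.compl)
  rw [← integrableOn_univ, ← preimage_univ (f := f), ← union_compl_self C, preimage_union]
  exact hatoms.union hrest

lemma setIntegral_fiberAverage_preimage (hf : Measurable f) (hh : Integrable h μ) {B : Set β}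
    (hB : MeasurableSet B) :
    ∫ x in f ⁻¹' B, fiberAverage μ f h x ∂μ = ∫ x in f ⁻¹' B, h x ∂μ := by
  set C := {c : β | 0 < μ (f ⁻¹' {c})}
  have hC : C.Countable := Measure.countable_meas_level_set_pos hf
  have hCm : MeasurableSet (f ⁻¹' C) := hf hC.measurableSet
  rw [← integral_inter_add_sdiff hCm (integrable_fiberAverage hf hh).integrableOn,
    ← integral_inter_add_sdiff hCm hh.integrableOn, ← preimage_inter]
  congr 1
  · have hBC : (B ∩ C).Countable := hC.mono inter_subset_right
    refine (hasSum_setIntegral_preimage_singleton hf hBC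
      (integrable_fiberAverage hf hh).integrableOn).unique ?_
    simpa only [setIntegral_fiberAverage_preimage_singleton hf] using
      hasSum_setIntegral_preimage_singleton hf hBC hh.integrableOn
  · exact setIntegral_congr_fun ((hf hB).diff hCm) fun x hx => fiberAverage_of_not_pos hx.2

lemma aestronglyMeasurable_comap_fiberAverage [StandardBorelSpace α]
    [MeasurableSpace.CountablySeparated β] (hf : Measurable f) {N : Set α}
    (hN : MeasurableSet N) (hNae : ∀ᵐ x ∂μ, x ∈ N)
    (hinj : InjOn f {x ∈ N | μ (f ⁻¹' {f x}) = 0}) (hh : AEStronglyMeasurable h μ) :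
    AEStronglyMeasurable[MeasurableSpace.comap f ‹MeasurableSpace β›] (fiberAverage μ f h) μ := by
  classical
  set C := {c : β | 0 < μ (f ⁻¹' {c})}
  have hC : C.Countable := Measure.countable_meas_level_set_pos hf
  have := hC.to_subtype
  have hN' : {x ∈ N | μ (f ⁻¹' {f x}) = 0} = N \ f ⁻¹' C := by
    ext x
    simp [C, pos_iff_ne_zero]
  obtain ⟨ψ, hψ, hψh⟩ := exists_measurable_comp_eqOn_of_injOn hf
    (hN.diff (hf hC.measurableSet)) (hN' ▸ hinj) hh.measurable_mk
  obtain ⟨φ, hφ, hφC, hφψ⟩ : ∃ φ : β → ℝ, Measurable φ ∧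
      (∀ c ∈ C, φ c = ⨍ y in f ⁻¹' {c}, h y ∂μ) ∧ ∀ c ∉ C, φ c = ψ c := by
    refine ⟨C.piecewise (fun c => ⨍ y in f ⁻¹' {c}, h y ∂μ) ψ, ?_,
      fun c hc => piecewise_eq_of_mem _ _ _ hc, fun c hc => piecewise_eq_of_notMem _ _ _ hc⟩
    refine measurable_of_restrict_of_restrict_compl hC.measurableSet
      (measurable_of_countable _) ?_
    convert hψ.comp measurable_subtype_coe using 1
    exact funext fun c => piecewise_eq_of_notMem _ _ _ c.2
  refine ⟨φ ∘ f, (hφ.comp (comap_measurable f)).stronglyMeasurable, ?_⟩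
  filter_upwards [hNae, hh.ae_eq_mk] with x hxN hx
  by_cases hpos : 0 < μ (f ⁻¹' {f x})
  · rw [eqOn_fiberAverage_preimage_singleton hpos rfl]
    exact (hφC _ hpos).symm
  · rw [fiberAverage_of_not_pos hpos, hx, hψh ⟨hxN, hpos⟩]
    exact (hφψ _ hpos).symm

theorem fiberAverage_ae_eq_condExp [StandardBorelSpace α]
    [MeasurableSpace.CountablySeparated β] (hf : Measurable f) {N : Set α}
    (hN : MeasurableSet N) (hNae : ∀ᵐ x ∂μ, x ∈ N)
    (hinj : InjOn f {x ∈ N | μ (f ⁻¹' {f x}) = 0}) (hh : Integrable h μ) :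
    fiberAverage μ f h =ᵐ[μ] μ[h | MeasurableSpace.comap f ‹MeasurableSpace β›] := by
  refine ae_eq_condExp_of_forall_setIntegral_eq hf.comap_le hh
    (fun _ _ _ => (integrable_fiberAverage hf hh).integrableOn) ?_
    (aestronglyMeasurable_comap_fiberAverage hf hN hNae hinj hh.1)
  rintro _ ⟨B, hB, rfl⟩ _
  exact setIntegral_fiberAverage_preimage hf hh hB

end FiberAverage

lemma MonotoneOn.injOn_of_restrict_preimage_singleton_eq_zero {g : ℝ → ℝ} {s : Set ℝ}
    (hs : s.OrdConnected) (hg : MonotoneOn g s) :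
    InjOn g {x ∈ s | volume.restrict s (g ⁻¹' {g x}) = 0} := by
  refine StrictMonoOn.injOn fun u hu v hv huv => (hg hu.1 hv.1 huv.le).lt_of_ne fun heq => ?_
  have hsub : Icc u v ⊆ g ⁻¹' {g u} ∩ s := fun w hw => by
    have hws : w ∈ s := hs.out hu.1 hv.1 hw
    exact ⟨le_antisymm (heq ▸ hg hws hv.1 hw.2) (hg hu.1 hws hw.1), hws⟩
  have hpos : 0 < volume.restrict s (g ⁻¹' {g u}) :=
    calc 0 < volume (Icc u v) := by simp [huv]
      _ ≤ volume (g ⁻¹' {g u} ∩ s) := measure_mono hsub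
      _ ≤ volume.restrict s (g ⁻¹' {g u}) := Measure.le_restrict_apply _ _
  exact hpos.ne' hu.2

instance : IsFiniteMeasure mu01 :=
  isFiniteMeasure_restrict.2 measure_Ioo_lt_top.ne

lemma projFun_eq_fiberAverage (g h : ℝ → ℝ) : projFun g h = fiberAverage mu01 g h := by
  funext u
  have hlevel : levelSet g u = g ⁻¹' {g u} ∩ Ioo 0 1 := by
    ext v
    simp [levelSet, and_comm]
  have hmeas : mu01 (g ⁻¹' {g u}) = volume (levelSet g u) := by
    rw [hlevel, mu01, Measure.restrict_apply' measurableSet_Ioo]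
  rw [projFun, fiberAverage, hmeas, setAverage_eq, measureReal_def, hmeas, mu01,
    Measure.restrict_restrict' measurableSet_Ioo, ← hlevel, smul_eq_mul, inv_mul_eq_div]

theorem stmt1_general (g h : ℝ → ℝ) (hgmono : MonotoneOn g (Set.Ioo (0:ℝ) 1))
    (hgmeas : Measurable g)
    (hh : MemLp h 2 mu01) :
    projFun g h =ᵐ[mu01] mu01[h | MeasurableSpace.comap g (borel ℝ)] := by
  rw [projFun_eq_fiberAverage]
  exact fiberAverage_ae_eq_condExp hgmeas measurableSet_Ioo
    (ae_restrict_mem measurableSet_Ioo)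
    (hgmono.injOn_of_restrict_preimage_singleton_eq_zero ordConnected_Ioo)
    (hh.integrable one_le_two)

/-- for `g` nondecreasing and càdlàg on `(0,1)` and `h ∈ L²(0,1)`,
the function `h_g` coincides a.e. with the conditional expectation of `h` given the
σ-algebra generated by `g`, i.e. with the orthogonal projection of `h` onto `L₂(g)`. -/
theorem stmt1 (g h : ℝ → ℝ) (hgmono : MonotoneOn g (Set.Ioo (0:ℝ) 1))
    (hgr : ∀ u ∈ Set.Ioo (0:ℝ) 1, ContinuousWithinAt g (Set.Ici u) u)
    (hgmeas : Measurable g)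
    (hh : MemLp h 2 mu01) :
    projFun g h =ᵐ[mu01] mu01[h | MeasurableSpace.comap g (borel ℝ)] :=
  stmt1_general g h hgmono hgmeas hh

end
end

section
/- Let g ∈ L²(0,1) have a nondecreasing modification, and define m_g(u) = leb{v ∈ (0,1) : g(u) = g(v)}. Then the squared Hilbert–Schmidt norm of the projection pr_g onto L₂(g) equals ∫₀¹ du / m_g(u), and this also equals the number #g of distinct values taken by the càdlàg nondecreasing modification of g (with the conventions 1/0 = ∞ and that the integral is +∞ if m_g(u) = 0 on a set of positive measure). In particular, ‖pr_g‖_HS < ∞ if and only if the càdlàg modification of g is a step function with finitely many values. -/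
/-!
The squared Hilbert–Schmidt norm of an orthogonal projection, computed in any Hilbert basis, is
the cardinality of a Hilbert basis of its range, and is at least the size of any orthonormal
family in its range. The normalized indicators of preimages `g ⁻¹' B` of disjoint value sets
`B` are orthonormal in `L₂(g)`.

If `g` takes finitely many values, right-continuity gives every level set positive length, a
function of `L₂(g)` is constant on level sets, and so the indicators of the level sets form a
Hilbert basis of `L₂(g)`; meanwhile `1 / m_g` integrates to `1` over each level set. If `g` takes
infinitely many values, monotonicity produces infinitely many disjoint value intervals whose
preimages have positive length, and each of them contributes at least `1` to both quantities.
-/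

open MeasureTheory Set ENNReal

noncomputable section

/-- The Hilbert space `L²((0,1), Lebesgue)`. -/
abbrev H := Lp ℝ 2 mu01

/-- The closed subspace `L₂(g)` of (a.e.) `σ(g)`-measurable functions in `L²`. -/
abbrev Lg (g : ℝ → ℝ) : Submodule ℝ H :=
  lpMeas ℝ ℝ (MeasurableSpace.comap g Real.measurableSpace) 2 mu01

/-- The orthogonal projection `pr_g` of `L²` onto `L₂(g)`, as an operator on `L²`. -/
def projOp (g : ℝ → ℝ) (hg : Measurable g) : H →L[ℝ] H :=
  haveI : Fact (MeasurableSpace.comap g Real.measurableSpace ≤ Real.measurableSpace) :=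
    ⟨hg.comap_le⟩
  (Lg g).subtypeL.comp ((Lg g).orthogonalProjectionOnto)

open Filter Topology RealInnerProductSpace

section HilbertSchmidt

variable {𝕜 E : Type*} [RCLike 𝕜] [NormedAddCommGroup E] [InnerProductSpace 𝕜 E]
  {ι J : Type*}

local notation "⟪" x ", " y "⟫" => inner 𝕜 x y

theorem enorm_sq_eq_ofReal {F : Type*} [SeminormedAddCommGroup F] (x : F) :
    ‖x‖ₑ ^ 2 = ENNReal.ofReal (‖x‖ ^ 2) := by
  rw [ENNReal.ofReal_pow (norm_nonneg _), ofReal_norm]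

theorem Orthonormal.tsum_enorm_inner_sq_eq_ofReal {f : J → E} (hf : Orthonormal 𝕜 f) (x : E) :
    ∑' j, ‖⟪f j, x⟫‖ₑ ^ 2 = ENNReal.ofReal (∑' j, ‖⟪f j, x⟫‖ ^ 2) := by
  simp only [enorm_sq_eq_ofReal]
  exact (ENNReal.ofReal_tsum_of_nonneg (fun _ => by positivity)
    (hf.inner_products_summable x)).symm

theorem Orthonormal.tsum_enorm_inner_sq_le {f : J → E} (hf : Orthonormal 𝕜 f) (x : E) :
    ∑' j, ‖⟪f j, x⟫‖ₑ ^ 2 ≤ ‖x‖ₑ ^ 2 := by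
  rw [hf.tsum_enorm_inner_sq_eq_ofReal, enorm_sq_eq_ofReal]
  exact ENNReal.ofReal_le_ofReal (hf.tsum_inner_products_le x)

theorem HilbertBasis.tsum_enorm_inner_sq (b : HilbertBasis ι 𝕜 E) (x : E) :
    ∑' i, ‖⟪b i, x⟫‖ₑ ^ 2 = ‖x‖ₑ ^ 2 := by
  have h := lp.norm_rpow_eq_tsum (p := 2) (by norm_num) (b.repr x)
  simp only [toReal_ofNat, Real.rpow_two, LinearIsometryEquiv.norm_map,
    b.repr_apply_apply] at h
  rw [b.orthonormal.tsum_enorm_inner_sq_eq_ofReal, ← h, enorm_sq_eq_ofReal]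

theorem Orthonormal.tsum_tsum_enorm_inner_sq (b : HilbertBasis ι 𝕜 E) {f : J → E}
    (hf : Orthonormal 𝕜 f) : ∑' i, ∑' j, ‖⟪f j, b i⟫‖ₑ ^ 2 = ∑' _ : J, 1 := by
  rw [ENNReal.tsum_comm]
  congr! with j
  simp_rw [← ofReal_norm, norm_inner_symm (f j), ofReal_norm, b.tsum_enorm_inner_sq,
    ← ofReal_norm, hf.1 j]
  simp

variable {K : Submodule 𝕜 E}

theorem tsum_one_le_tsum_enorm_sq_starProjection [K.HasOrthogonalProjection]
    (b : HilbertBasis ι 𝕜 E) {f : J → E} (hf : Orthonormal 𝕜 f) (hfK : ∀ j, f j ∈ K) :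
    ∑' _ : J, 1 ≤ ∑' i, ‖K.starProjection (b i)‖ₑ ^ 2 := by
  rw [← hf.tsum_tsum_enorm_inner_sq b]
  refine ENNReal.tsum_le_tsum fun i => ?_
  convert hf.tsum_enorm_inner_sq_le (K.starProjection (b i)) using 4 with j
  rw [← K.inner_starProjection_left_eq_right, K.starProjection_eq_self_iff.mpr (hfK j)]

theorem tsum_enorm_sq_starProjection_eq_tsum_one [CompleteSpace K] (b : HilbertBasis ι 𝕜 E)
    (c : HilbertBasis J 𝕜 K) : ∑' i, ‖K.starProjection (b i)‖ₑ ^ 2 = ∑' _ : J, 1 := by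
  rw [← (K.subtypeₗᵢ.orthonormal_comp_iff.mpr c.orthonormal).tsum_tsum_enorm_inner_sq b]
  congr! with i
  rw [K.starProjection_apply, ← enorm_norm, ← K.coe_norm, enorm_norm, ← c.tsum_enorm_inner_sq]
  simp

theorem Orthonormal.exists_hilbertBasis_of_forall_inner_eq_zero [CompleteSpace K] {f : J → E}
    (hf : Orthonormal 𝕜 f) (hfK : ∀ j, f j ∈ K)
    (hmax : ∀ x ∈ K, (∀ j, ⟪f j, x⟫ = 0) → x = 0) :
    ∃ c : HilbertBasis J 𝕜 K, ∀ j, (c j : E) = f j := by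
  set f' : J → K := fun j => ⟨f j, hfK j⟩
  have hf' : Orthonormal 𝕜 f' := K.subtypeₗᵢ.orthonormal_comp_iff.mp hf
  refine ⟨HilbertBasis.mkOfOrthogonalEqBot hf' ?_,
    fun j => by rw [HilbertBasis.coe_mkOfOrthogonalEqBot]⟩
  rw [Submodule.eq_bot_iff]
  intro x hx
  refine Subtype.ext (hmax x x.2 fun j => ?_)
  exact inner_eq_zero_symm.mp
    ((Submodule.mem_orthogonal' _ _).mp hx (f' j) (Submodule.subset_span ⟨j, rfl⟩))

end HilbertSchmidt

section NormalizedIndicator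

variable {α : Type*} [MeasurableSpace α] {μ : Measure α} {J : Type*}

def normalizedIndicatorLp (μ : Measure α) {S : Set α} (hS : MeasurableSet S) (hμS : μ S ≠ ∞) :
    Lp ℝ 2 μ :=
  indicatorConstLp 2 hS hμS (√(μ.real S))⁻¹

theorem inner_normalizedIndicatorLp {S : Set α} (hS : MeasurableSet S) (hμS : μ S ≠ ∞)
    (x : Lp ℝ 2 μ) :
    ⟪normalizedIndicatorLp μ hS hμS, x⟫ = (∫ v in S, x v ∂μ) * (√(μ.real S))⁻¹ := by
  rw [normalizedIndicatorLp, L2.inner_indicatorConstLp_eq_inner_setIntegral ℝ,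
    RCLike.inner_apply, conj_trivial]

theorem orthonormal_normalizedIndicatorLp {S : J → Set α} (hS : ∀ j, MeasurableSet (S j))
    (hμS : ∀ j, μ (S j) ≠ ∞) (hd : Pairwise (Function.onFun Disjoint S))
    (hpos : ∀ j, μ (S j) ≠ 0) :
    Orthonormal ℝ fun j => normalizedIndicatorLp μ (hS j) (hμS j) := by
  classical
  rw [orthonormal_iff_ite]
  intro i j
  rw [normalizedIndicatorLp, normalizedIndicatorLp,
    L2.inner_indicatorConstLp_indicatorConstLp (hS i) (hS j) (hμS i) (hμS j)]
  split_ifs with hij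
  · subst hij
    have hreal : 0 < μ.real (S i) := ENNReal.toReal_pos (hpos i) (hμS i)
    rw [inter_self, RCLike.inner_apply, conj_trivial, smul_eq_mul, ← mul_inv,
      Real.mul_self_sqrt hreal.le, mul_inv_cancel₀ hreal.ne']
  · simp [Set.disjoint_iff_inter_eq_empty.mp (hd hij)]

end NormalizedIndicator

instance isFiniteMeasure_mu01 : IsFiniteMeasure mu01 := by
  unfold mu01; infer_instance

section LevelSets

variable {g : ℝ → ℝ}

theorem mu01_apply (S : Set ℝ) : mu01 S = volume (S ∩ Ioo 0 1) :=
  Measure.restrict_apply' measurableSet_Ioo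

theorem levelSet_eq_preimage_inter (u : ℝ) : levelSet g u = g ⁻¹' {g u} ∩ Ioo 0 1 := by
  ext v; simp [levelSet, and_comm]

theorem mu01_preimage_singleton (u : ℝ) : mu01 (g ⁻¹' {g u}) = volume (levelSet g u) := by
  rw [mu01_apply, levelSet_eq_preimage_inter]

theorem measurableSet_levelSet (hg : Measurable g) (u : ℝ) : MeasurableSet (levelSet g u) := by
  rw [levelSet_eq_preimage_inter]
  exact (hg (measurableSet_singleton _)).inter measurableSet_Ioo

theorem volume_levelSet_pos {u : ℝ} (hu : u ∈ Ioo (0:ℝ) 1)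
    (hgr : ContinuousWithinAt g (Ici u) u) (hfin : (g '' Ioo 0 1).Finite) :
    0 < volume (levelSet g u) := by
  have hisolated : (g '' Ioo 0 1 \ {g u})ᶜ ∈ 𝓝 (g u) :=
    hfin.sdiff.isClosed.isOpen_compl.mem_nhds (by simp)
  have hnhds : levelSet g u ∈ 𝓝[≥] u := by
    filter_upwards [hgr hisolated, mem_nhdsWithin_of_mem_nhds (Ioo_mem_nhds hu.1 hu.2)]
      with v hv hvI
    exact ⟨hvI, by simpa [mem_image_of_mem g hvI] using hv⟩
  obtain ⟨w, hw, hsub⟩ := mem_nhdsGE_iff_exists_Ico_subset.mp hnhds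
  exact (measure_mono hsub).trans_lt' (by simpa using hw)

theorem setLIntegral_inv_volume_levelSet (hg : Measurable g) {u : ℝ}
    (hpos : volume (levelSet g u) ≠ 0) :
    ∫⁻ v in levelSet g u, (volume (levelSet g v))⁻¹ = 1 := by
  have hfin : volume (levelSet g u) ≠ ∞ :=
    measure_ne_top_of_subset (fun v hv => hv.1) (by simp)
  rw [setLIntegral_congr_fun (measurableSet_levelSet hg u)
      (g := fun _ => (volume (levelSet g u))⁻¹) fun v hv => by
        rw [levelSet_eq_preimage_inter, levelSet_eq_preimage_inter, hv.2],
    setLIntegral_const, ENNReal.inv_mul_cancel hpos hfin]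

theorem one_le_setLIntegral_inv_volume_levelSet {S : Set ℝ} (hS : MeasurableSet S)
    (h0 : volume S ≠ 0) (hfin : volume S ≠ ∞) (hsat : ∀ u ∈ S, levelSet g u ⊆ S) :
    1 ≤ ∫⁻ u in S, (volume (levelSet g u))⁻¹ :=
  calc 1 = ∫⁻ _ in S, (volume S)⁻¹ := by rw [setLIntegral_const, ENNReal.inv_mul_cancel h0 hfin]
    _ ≤ ∫⁻ u in S, (volume (levelSet g u))⁻¹ :=
      setLIntegral_mono' hS fun u hu => ENNReal.inv_le_inv' (measure_mono (hsat u hu))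

theorem lintegral_inv_volume_levelSet_of_finite (hg : Measurable g)
    (hgr : ∀ u ∈ Ioo (0:ℝ) 1, ContinuousWithinAt g (Ici u) u) (hfin : (g '' Ioo 0 1).Finite) :
    ∫⁻ u in Ioo (0:ℝ) 1, (volume (levelSet g u))⁻¹ = (g '' Ioo 0 1).encard := by
  choose! pt hpt hgpt using fun c (hc : c ∈ g '' Ioo (0:ℝ) 1) => hc
  have : Countable (g '' Ioo (0:ℝ) 1) := hfin.countable.to_subtype
  have hcover : Ioo (0:ℝ) 1 = ⋃ c : g '' Ioo (0:ℝ) 1, levelSet g (pt c) := by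
    ext u
    simp only [mem_iUnion, Subtype.exists, mem_image]
    refine ⟨fun hu => ⟨g u, ⟨u, hu, rfl⟩, hu, ?_⟩, fun ⟨_, _, hu, _⟩ => hu⟩
    rw [hgpt _ ⟨u, hu, rfl⟩]
  have hdisj :
      Pairwise (Function.onFun Disjoint fun c : g '' Ioo (0:ℝ) 1 => levelSet g (pt c)) :=
    fun (c c' : g '' Ioo (0:ℝ) 1) hcc' => disjoint_left.mpr fun v hv hv' =>
      hcc' (Subtype.ext (by rw [← hgpt c c.2, ← hgpt c' c'.2, ← hv.2, hv'.2]))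
  rw [← tsum_set_one]
  conv_lhs => rw [hcover, lintegral_iUnion (fun c => measurableSet_levelSet hg _) hdisj]
  exact tsum_congr fun c => setLIntegral_inv_volume_levelSet hg
    (volume_levelSet_pos (hpt c c.2) (hgr _ (hpt c c.2)) hfin).ne'

theorem tsum_one_le_lintegral_inv_volume_levelSet (hg : Measurable g) {J : Type*} [Countable J]
    {B : J → Set ℝ} (hB : ∀ j, MeasurableSet (B j)) (hd : Pairwise (Function.onFun Disjoint B))
    (hpos : ∀ j, mu01 (g ⁻¹' B j) ≠ 0) :
    ∑' _ : J, 1 ≤ ∫⁻ u in Ioo (0:ℝ) 1, (volume (levelSet g u))⁻¹ := by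
  set S : J → Set ℝ := fun j => g ⁻¹' B j ∩ Ioo 0 1
  have hS : ∀ j, MeasurableSet (S j) := fun j => (hg (hB j)).inter measurableSet_Ioo
  have hSd : Pairwise (Function.onFun Disjoint S) := fun i j hij =>
    ((hd hij).preimage g).mono inter_subset_left inter_subset_left
  calc ∑' _ : J, 1 ≤ ∑' j, ∫⁻ u in S j, (volume (levelSet g u))⁻¹ :=
        ENNReal.tsum_le_tsum fun j => one_le_setLIntegral_inv_volume_levelSet (hS j)
          (by rw [← mu01_apply]; exact hpos j) (by rw [← mu01_apply]; exact measure_ne_top _ _)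
          fun u hu v hv => ⟨by rw [mem_preimage, hv.2]; exact hu.1, hv.1⟩
    _ = ∫⁻ u in ⋃ j, S j, (volume (levelSet g u))⁻¹ := (lintegral_iUnion hS hSd _).symm
    _ ≤ ∫⁻ u in Ioo (0:ℝ) 1, (volume (levelSet g u))⁻¹ :=
        lintegral_mono_set (iUnion_subset fun _ => inter_subset_right)

theorem mu01_preimage_Ioc_ne_zero (hgmono : MonotoneOn g (Ioo 0 1)) {x y a : ℝ}
    (hx : x ∈ Ioo (0:ℝ) 1) (hy : y ∈ Ioo (0:ℝ) 1) (hxy : g x < g y) (ha : a < g x) :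
    mu01 (g ⁻¹' Ioc a (g y)) ≠ 0 := by
  have hlt : x < y := hgmono.reflect_lt hx hy hxy
  have hsub : Ioc x y ⊆ g ⁻¹' Ioc a (g y) ∩ Ioo 0 1 := fun v hv => by
    have hv01 : v ∈ Ioo (0:ℝ) 1 := ⟨hx.1.trans hv.1, hv.2.trans_lt hy.2⟩
    exact ⟨⟨ha.trans_le (hgmono hx hv01 hv.1.le), hgmono hv01 hy hv.2⟩, hv01⟩
  rw [mu01_apply]
  exact (measure_mono hsub).trans_lt' (by simpa using hlt) |>.ne'

theorem exists_pairwise_disjoint_mu01_preimage_ne_zero (hgmono : MonotoneOn g (Ioo 0 1))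
    (hinf : (g '' Ioo (0:ℝ) 1).Infinite) :
    ∃ B : ℕ → Set ℝ, (∀ n, MeasurableSet (B n)) ∧ Pairwise (Function.onFun Disjoint B) ∧
      ∀ n, mu01 (g ⁻¹' B n) ≠ 0 := by
  have := hinf.to_subtype
  obtain ⟨c, hc⟩ := Infinite.exists_strictMono_or_strictAnti (g '' Ioo (0:ℝ) 1)
  choose u hu hgu using fun n => (c n).2
  have hmul : StrictMono fun n : ℕ => 2 * n := strictMono_mul_left_of_pos two_pos
  -- each interval between consecutive even-indexed values contains the odd-indexed value
  -- in its interior, which forces its preimage to have positive length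
  rcases hc with hinc | hdec
  · have hinc' : StrictMono fun n => (c n : ℝ) := (Subtype.strictMono_coe _).comp hinc
    refine ⟨fun n => Ioc (c (2 * n)) (c (2 * (n + 1))), fun _ => measurableSet_Ioc,
      (hinc'.comp hmul).monotone.pairwise_disjoint_on_Ioc_succ, fun n => ?_⟩
    dsimp only
    rw [← hgu (2 * (n + 1))]
    exact mu01_preimage_Ioc_ne_zero hgmono (hu (2 * n + 1)) (hu _)
      (by rw [hgu, hgu]; exact hinc' (by omega)) (by rw [hgu]; exact hinc' (by omega))
  · have hdec' : StrictAnti fun n => (c n : ℝ) :=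
      (Subtype.strictMono_coe _).comp_strictAnti hdec
    refine ⟨fun n => Ioc (c (2 * (n + 1))) (c (2 * n)), fun _ => measurableSet_Ioc,
      (hdec'.comp_strictMono hmul).antitone.pairwise_disjoint_on_Ioc_succ, fun n => ?_⟩
    dsimp only
    rw [← hgu (2 * n)]
    exact mu01_preimage_Ioc_ne_zero hgmono (hu (2 * n + 1)) (hu _)
      (by rw [hgu, hgu]; exact hdec' (by omega)) (by rw [hgu]; exact hdec' (by omega))

end LevelSets

section ProjectionOntoLg

variable {g : ℝ → ℝ} {ι J : Type*}

theorem normalizedIndicatorLp_preimage_mem_Lg (hg : Measurable g) {B : Set ℝ}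
    (hB : MeasurableSet B) : normalizedIndicatorLp mu01 (hg hB) (measure_ne_top _ _) ∈ Lg g :=
  mem_lpMeas_indicatorConstLp hg.comap_le ⟨B, hB, rfl⟩ _

theorem orthonormal_normalizedIndicatorLp_preimage (hg : Measurable g) {B : J → Set ℝ}
    (hB : ∀ j, MeasurableSet (B j)) (hd : Pairwise (Function.onFun Disjoint B))
    (hpos : ∀ j, mu01 (g ⁻¹' B j) ≠ 0) :
    Orthonormal ℝ fun j => normalizedIndicatorLp mu01 (hg (hB j)) (measure_ne_top _ _) :=
  orthonormal_normalizedIndicatorLp _ _ (fun _ _ hij => (hd hij).preimage g) hpos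

theorem eq_zero_of_mem_Lg_of_setIntegral_eq_zero (hg : Measurable g)
    (hpos : ∀ u ∈ Ioo (0:ℝ) 1, mu01 (g ⁻¹' {g u}) ≠ 0) {x : H} (hx : x ∈ Lg g)
    (hint : ∀ u ∈ Ioo (0:ℝ) 1, ∫ v in g ⁻¹' {g u}, x v ∂mu01 = 0) : x = 0 := by
  obtain ⟨f, hf, hxf⟩ := mem_lpMeas_iff_aestronglyMeasurable.mp hx
  have hf0 : ∀ u ∈ Ioo (0:ℝ) 1, f u = 0 := by
    intro u hu
    have hconst : ∫ v in g ⁻¹' {g u}, x v ∂mu01 = mu01.real (g ⁻¹' {g u}) * f u := by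
      rw [setIntegral_congr_ae (hg (measurableSet_singleton _)) (hxf.mono fun v hv _ => hv),
        setIntegral_congr_fun (hg (measurableSet_singleton _)) fun v hv => hf.factorsThrough hv,
        setIntegral_const, smul_eq_mul]
    have hreal : mu01.real (g ⁻¹' {g u}) ≠ 0 :=
      (ENNReal.toReal_pos (hpos u hu) (measure_ne_top _ _)).ne'
    simpa [hreal, hint u hu] using hconst.symm
  refine Lp.ext (hxf.trans ?_ |>.trans (Lp.coeFn_zero ℝ 2 mu01).symm)
  exact (ae_restrict_mem measurableSet_Ioo).mono hf0

theorem tsum_one_le_tsum_enorm_sq_projOp (hg : Measurable g) (b : HilbertBasis ι ℝ H)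
    {B : J → Set ℝ} (hB : ∀ j, MeasurableSet (B j)) (hd : Pairwise (Function.onFun Disjoint B))
    (hpos : ∀ j, mu01 (g ⁻¹' B j) ≠ 0) :
    ∑' _ : J, 1 ≤ ∑' i, ‖projOp g hg (b i)‖ₑ ^ 2 :=
  have : Fact (MeasurableSpace.comap g Real.measurableSpace ≤ Real.measurableSpace) :=
    ⟨hg.comap_le⟩
  tsum_one_le_tsum_enorm_sq_starProjection b
    (orthonormal_normalizedIndicatorLp_preimage hg hB hd hpos)
    fun j => normalizedIndicatorLp_preimage_mem_Lg hg (hB j)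

theorem tsum_enorm_sq_projOp_of_finite (hg : Measurable g)
    (hgr : ∀ u ∈ Ioo (0:ℝ) 1, ContinuousWithinAt g (Ici u) u) (hfin : (g '' Ioo (0:ℝ) 1).Finite)
    (b : HilbertBasis ι ℝ H) :
    ∑' i, ‖projOp g hg (b i)‖ₑ ^ 2 = (g '' Ioo (0:ℝ) 1).encard := by
  have : Fact (MeasurableSpace.comap g Real.measurableSpace ≤ Real.measurableSpace) :=
    ⟨hg.comap_le⟩
  have hpos : ∀ u ∈ Ioo (0:ℝ) 1, mu01 (g ⁻¹' {g u}) ≠ 0 := fun u hu => by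
    rw [mu01_preimage_singleton]; exact (volume_levelSet_pos hu (hgr u hu) hfin).ne'
  set e : g '' Ioo (0:ℝ) 1 → H := fun c =>
    normalizedIndicatorLp mu01 (hg (measurableSet_singleton c.1)) (measure_ne_top _ _)
  have he : Orthonormal ℝ e :=
    orthonormal_normalizedIndicatorLp_preimage (B := fun c : g '' Ioo (0:ℝ) 1 => {c.1}) hg
      (fun _ => measurableSet_singleton _)
      (fun _ _ hcc' => disjoint_singleton.mpr (Subtype.coe_injective.ne hcc'))
      fun c => by obtain ⟨_, u, hu, rfl⟩ := c; exact hpos u hu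
  have hmax : ∀ x ∈ Lg g, (∀ c, ⟪e c, x⟫ = 0) → x = 0 := fun x hx horth =>
    eq_zero_of_mem_Lg_of_setIntegral_eq_zero hg hpos hx fun u hu => by
      have h := horth ⟨g u, u, hu, rfl⟩
      rw [inner_normalizedIndicatorLp, mul_eq_zero] at h
      exact h.resolve_right (inv_ne_zero (Real.sqrt_ne_zero'.mpr
        (ENNReal.toReal_pos (hpos u hu) (measure_ne_top _ _))))
  obtain ⟨c, -⟩ := he.exists_hilbertBasis_of_forall_inner_eq_zero
    (fun _ => normalizedIndicatorLp_preimage_mem_Lg hg (measurableSet_singleton _)) hmax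
  rw [← tsum_set_one]
  exact tsum_enorm_sq_starProjection_eq_tsum_one b c

end ProjectionOntoLg

theorem tsum_enorm_sq_projOp_eq_encard {g : ℝ → ℝ} (hgmono : MonotoneOn g (Ioo (0:ℝ) 1))
    (hgr : ∀ u ∈ Ioo (0:ℝ) 1, ContinuousWithinAt g (Ici u) u) (hg : Measurable g)
    {ι : Type*} (b : HilbertBasis ι ℝ H) :
    ∑' i, ‖projOp g hg (b i)‖ₑ ^ 2 = (g '' Ioo (0:ℝ) 1).encard := by
  by_cases hfin : (g '' Ioo (0:ℝ) 1).Finite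
  · exact tsum_enorm_sq_projOp_of_finite hg hgr hfin b
  obtain ⟨B, hB, hd, hpos⟩ := exists_pairwise_disjoint_mu01_preimage_ne_zero hgmono hfin
  rw [Set.Infinite.encard_eq hfin, ENat.toENNReal_top, eq_top_iff,
    ← ENNReal.tsum_const_eq_top_of_ne_zero (α := ℕ) one_ne_zero]
  exact tsum_one_le_tsum_enorm_sq_projOp hg b hB hd hpos

theorem lintegral_inv_volume_levelSet_eq_encard {g : ℝ → ℝ}
    (hgmono : MonotoneOn g (Ioo (0:ℝ) 1))
    (hgr : ∀ u ∈ Ioo (0:ℝ) 1, ContinuousWithinAt g (Ici u) u) (hg : Measurable g) :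
    ∫⁻ u in Ioo (0:ℝ) 1, (volume (levelSet g u))⁻¹ = (g '' Ioo (0:ℝ) 1).encard := by
  by_cases hfin : (g '' Ioo (0:ℝ) 1).Finite
  · exact lintegral_inv_volume_levelSet_of_finite hg hgr hfin
  obtain ⟨B, hB, hd, hpos⟩ := exists_pairwise_disjoint_mu01_preimage_ne_zero hgmono hfin
  rw [Set.Infinite.encard_eq hfin, ENat.toENNReal_top, eq_top_iff,
    ← ENNReal.tsum_const_eq_top_of_ne_zero (α := ℕ) one_ne_zero]
  exact tsum_one_le_lintegral_inv_volume_levelSet hg hB hd hpos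

theorem stmt3_general (g : ℝ → ℝ) (hgmono : MonotoneOn g (Set.Ioo (0:ℝ) 1))
    (hgr : ∀ u ∈ Set.Ioo (0:ℝ) 1, ContinuousWithinAt g (Set.Ici u) u)
    (hgmeas : Measurable g)
    {ι : Type} (b : HilbertBasis ι ℝ H) :
    (∑' i : ι, (‖projOp g hgmeas (b i)‖₊ : ℝ≥0∞) ^ 2)
        = ∫⁻ u in Set.Ioo (0:ℝ) 1, (volume (levelSet g u))⁻¹ ∧
      (∑' i : ι, (‖projOp g hgmeas (b i)‖₊ : ℝ≥0∞) ^ 2)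
        = ((g '' Set.Ioo (0:ℝ) 1).encard : ℝ≥0∞) ∧
      ((∑' i : ι, (‖projOp g hgmeas (b i)‖₊ : ℝ≥0∞) ^ 2) < ∞ ↔
        (g '' Set.Ioo (0:ℝ) 1).Finite) := by
  have hHS : ∑' i : ι, (‖projOp g hgmeas (b i)‖₊ : ℝ≥0∞) ^ 2 = (g '' Ioo (0:ℝ) 1).encard :=
    tsum_enorm_sq_projOp_eq_encard hgmono hgr hgmeas b
  refine ⟨hHS.trans (lintegral_inv_volume_levelSet_eq_encard hgmono hgr hgmeas).symm, hHS, ?_⟩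
  rw [hHS, ENat.toENNReal_lt_top, Set.encard_lt_top_iff]

/-- for `g ∈ L₂↑` with nondecreasing càdlàg modification (here `g` itself
is taken nondecreasing, càdlàg and measurable) and `m_g(u) = leb{v : g u = g v}`, the
squared Hilbert–Schmidt norm of `pr_g` (computed in any Hilbert basis) equals
`∫₀¹ du / m_g(u)` (with `1/0 = ∞`) and equals the number `#g` of distinct values of `g`
on `(0,1)`; in particular it is finite iff `g` takes finitely many values on `(0,1)`. -/
theorem stmt3 (g : ℝ → ℝ) (hgmono : MonotoneOn g (Set.Ioo (0:ℝ) 1))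
    (hgr : ∀ u ∈ Set.Ioo (0:ℝ) 1, ContinuousWithinAt g (Set.Ici u) u)
    (hgmeas : Measurable g) (hg2 : MemLp g 2 mu01)
    {ι : Type} (b : HilbertBasis ι ℝ H) :
    (∑' i : ι, (‖projOp g hgmeas (b i)‖₊ : ℝ≥0∞) ^ 2)
        = ∫⁻ u in Set.Ioo (0:ℝ) 1, (volume (levelSet g u))⁻¹ ∧
      (∑' i : ι, (‖projOp g hgmeas (b i)‖₊ : ℝ≥0∞) ^ 2)
        = ((g '' Set.Ioo (0:ℝ) 1).encard : ℝ≥0∞) ∧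
      ((∑' i : ι, (‖projOp g hgmeas (b i)‖₊ : ℝ≥0∞) ^ 2) < ∞ ↔
        (g '' Set.Ioo (0:ℝ) 1).Finite) :=
  stmt3_general g hgmono hgr hgmeas b
end
end

section
/- For every C > 0 and δ > 0, the set K_C = {g ∈ L₂↑ : ‖g‖_{L^{2+δ}} ≤ C} is compact in L² (0,1). -/
open MeasureTheory Set

noncomputable section

/-!
Closedness: an `L²`-convergent sequence has an a.e.-convergent subsequence, so the limit is
monotone on a set of full measure, which is dense in `(0, 1)` and therefore carries a monotone
extension; the `L^{2+δ}` bound passes to the limit by Fatou.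

Total boundedness: by the `L^{2+δ}` bound, truncating at height `M` costs at most
`M^{-δ/2} C^{1+δ/2}` in `L²`. A monotone `F` with values in `[-M, M]` differs from the step
function with values `F ((k+1)/n)` on `[k/n, (k+1)/n)` by at most `F (x + 1/n) - F x`, whose
integral over `(0, 1)` is at most `2M/n`; hence the error is at most `2M/√n` in `L²`. The step
functions with values in `[-M, M]` form a compact set.
-/

open Filter Topology ENNReal

theorem MonotoneOn.exists_monotoneOn_extension {α β : Type*} [Preorder α]
    [ConditionallyCompleteLattice β] {h : α → β} {S I : Set α} (hh : MonotoneOn h S)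
    (hSI : ∀ x ∈ I, (∃ s ∈ S, s ≤ x) ∧ ∃ s ∈ S, x ≤ s) :
    ∃ f : α → β, MonotoneOn f I ∧ EqOn f h S := by
  have hbdd : ∀ x ∈ I, BddBelow (h '' (S ∩ Ici x)) := by
    rintro x hx
    obtain ⟨w, hwS, hwx⟩ := (hSI x hx).1
    exact ⟨h w, by rintro - ⟨z, ⟨hzS, hxz⟩, rfl⟩; exact hh hwS hzS (hwx.trans hxz)⟩
  refine ⟨fun x => sInf (h '' (S ∩ Ici x)), fun x hx y hy hxy => ?_, fun x hx => ?_⟩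
  · obtain ⟨z, hzS, hyz⟩ := (hSI y hy).2
    exact csInf_le_csInf (hbdd x hx) ⟨h z, z, ⟨hzS, hyz⟩, rfl⟩
      (image_mono (inter_subset_inter_right _ (Ici_subset_Ici.2 hxy)))
  · refine IsLeast.csInf_eq ⟨⟨x, ⟨hx, le_rfl⟩, rfl⟩, ?_⟩
    rintro - ⟨z, ⟨hzS, hxz⟩, rfl⟩
    exact hh hx hzS hxz

theorem MonotoneOn.exists_monotone_abs_le_eqOn_clamp {f : ℝ → ℝ} {s : Set ℝ}
    (hf : MonotoneOn f s) {M : ℝ} (hM : 0 ≤ M) :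
    ∃ F : ℝ → ℝ, Monotone F ∧ (∀ x, |F x| ≤ M) ∧
      EqOn F (fun x => max (-M) (min M (f x))) s := by
  have hclamp : Monotone fun y : ℝ => max (-M) (min M y) := fun y z hyz =>
    max_le_max le_rfl (min_le_min le_rfl hyz)
  have hbound : ∀ y : ℝ, |max (-M) (min M y)| ≤ M := fun y =>
    abs_le.2 ⟨le_max_left _ _, max_le (by linarith) (min_le_left _ _)⟩
  obtain ⟨G, hG, hGf⟩ := (hclamp.comp_monotoneOn hf).exists_monotone_extension
    ⟨-M, by rintro - ⟨x, -, rfl⟩; exact (abs_le.1 (hbound _)).1⟩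
    ⟨M, by rintro - ⟨x, -, rfl⟩; exact (abs_le.1 (hbound _)).2⟩
  refine ⟨fun x => max (-M) (min M (G x)), hclamp.comp hG, fun x => hbound _, fun x hx => ?_⟩
  obtain ⟨h₁, h₂⟩ := abs_le.1 (hbound (f x))
  simp only [← hGf hx, Function.comp_apply, min_eq_right h₂, max_eq_right h₁]

theorem totallyBounded_of_forall_exists_totallyBounded {X : Type*} [PseudoMetricSpace X]
    {s : Set X} (h : ∀ ε > 0, ∃ K : Set X, TotallyBounded K ∧ ∀ x ∈ s, ∃ y ∈ K,
      dist x y ≤ ε) :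
    TotallyBounded s := by
  refine Metric.totallyBounded_iff.2 fun ε hε => ?_
  obtain ⟨K, hK, hsK⟩ := h (ε / 2) (half_pos hε)
  obtain ⟨t, ht, hKt⟩ := Metric.totallyBounded_iff.1 hK (ε / 2) (half_pos hε)
  refine ⟨t, ht, fun x hx => ?_⟩
  obtain ⟨y, hyK, hxy⟩ := hsK x hx
  obtain ⟨z, hzt, hyz⟩ := mem_iUnion₂.1 (hKt hyK)
  rw [Metric.mem_ball] at hyz
  exact mem_iUnion₂.2 ⟨z, hzt, Metric.mem_ball.2 (by linarith [dist_triangle x y z])⟩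

theorem isClosed_setOf_eLpNorm_le {α E : Type*} [MeasurableSpace α] {μ : Measure α}
    [NormedAddCommGroup E] (p : ℝ≥0∞) [Fact (1 ≤ p)] (q : ℝ≥0∞) (c : ℝ≥0∞) :
    IsClosed {g : Lp E p μ | eLpNorm g q μ ≤ c} := by
  refine IsSeqClosed.isClosed fun gs g hgs hlim => ?_
  obtain ⟨ns, -, hae⟩ := (tendstoInMeasure_of_tendsto_Lp hlim).exists_seq_tendsto_ae
  exact Lp.eLpNorm_le_of_ae_tendsto (Eventually.of_forall fun i => hgs (ns i))
    (fun i => Lp.aestronglyMeasurable _) hae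

theorem abs_sub_clamp_le {x M r : ℝ} (hM : 0 < M) (hr : 1 ≤ r) :
    |x - max (-M) (min M x)| ≤ M ^ (1 - r) * |x| ^ r := by
  by_cases hx : |x| ≤ M
  · obtain ⟨h₁, h₂⟩ := abs_le.1 hx
    rw [min_eq_right h₂, max_eq_right h₁, sub_self, abs_zero]
    positivity
  rw [not_le] at hx
  have hx0 : 0 < |x| := hM.trans hx
  calc |x - max (-M) (min M x)| ≤ |x| := by
        rcases lt_abs.1 hx with h | h
        · rw [min_eq_left (by linarith), max_eq_right (by linarith), abs_of_pos (by linarith)]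
          linarith [le_abs_self x]
        · rw [min_eq_right (by linarith), max_eq_left (by linarith), abs_of_neg (by linarith)]
          linarith [neg_abs_le x]
    _ = |x| ^ (1 - r) * |x| ^ r := by rw [← Real.rpow_add hx0, sub_add_cancel, Real.rpow_one]
    _ ≤ M ^ (1 - r) * |x| ^ r := by
        have : 1 - r ≤ 0 := by linarith
        exact mul_le_mul_of_nonneg_right (Real.rpow_le_rpow_of_nonpos hM hx.le this) (by positivity)

theorem eLpNorm_sub_clamp_le {α : Type*} [MeasurableSpace α] {μ : Measure α} (f : α → ℝ)
    (p : ℝ≥0∞) {M r : ℝ} (hM : 0 < M) (hr : 1 ≤ r) :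
    eLpNorm (fun x => f x - max (-M) (min M (f x))) p μ ≤
      ENNReal.ofReal (M ^ (1 - r)) * eLpNorm f (p * ENNReal.ofReal r) μ ^ r :=
  calc _ ≤ eLpNorm ((M ^ (1 - r)) • fun x => ‖f x‖ ^ r) p μ :=
        eLpNorm_mono_real fun x => abs_sub_clamp_le hM hr
    _ = _ := by
        rw [eLpNorm_const_smul, eLpNorm_norm_rpow f (by linarith),
          Real.enorm_of_nonneg (by positivity)]

theorem exists_forall_eLpNorm_sub_clamp_le {α : Type*} [MeasurableSpace α] (μ : Measure α)
    {p q : ℝ} (hp : 0 < p) (hpq : p < q) {C : ℝ≥0∞} (hC : C ≠ ⊤) {ε : ℝ≥0∞}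
    (hε : 0 < ε) :
    ∃ M > 0, ∀ f : α → ℝ, eLpNorm f (ENNReal.ofReal q) μ ≤ C →
      eLpNorm (fun x => f x - max (-M) (min M (f x))) (ENNReal.ofReal p) μ ≤ ε := by
  have hr : 1 ≤ q / p := (one_le_div hp).2 hpq.le
  have hlim : Tendsto (fun M : ℝ => ENNReal.ofReal (M ^ (1 - q / p)) * C ^ (q / p)) atTop
      (𝓝 0) := by
    have h := (ENNReal.continuous_ofReal.tendsto 0).comp
      (tendsto_rpow_neg_atTop (sub_pos.2 ((one_lt_div hp).2 hpq)))
    rw [ENNReal.ofReal_zero] at h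
    simpa using
      ENNReal.Tendsto.mul_const h (.inr (ENNReal.rpow_ne_top_of_nonneg (by positivity) hC))
  obtain ⟨M, hMε, hM⟩ :=
    ((hlim.eventually (eventually_le_nhds hε)).and (eventually_gt_atTop 0)).exists
  refine ⟨M, hM, fun f hf => (eLpNorm_sub_clamp_le f _ hM hr).trans (le_trans ?_ hMε)⟩
  rw [← ENNReal.ofReal_mul hp.le, mul_div_cancel₀ _ hp.ne']
  gcongr

theorem eLpNorm_two_le_ofReal_sqrt_integral {α : Type*} [MeasurableSpace α] {μ : Measure α}
    {u w : α → ℝ} (hw : Integrable w μ) (huw : ∀ᵐ x ∂μ, u x ^ 2 ≤ w x) :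
    eLpNorm u 2 μ ≤ ENNReal.ofReal √(∫ x, w x ∂μ) := by
  have hw0 : 0 ≤ᵐ[μ] w := huw.mono fun x hx => (sq_nonneg _).trans hx
  refine (ENNReal.rpow_le_rpow_iff two_pos).1 ?_
  calc eLpNorm u 2 μ ^ (2:ℝ) = eLpNorm (fun x => ‖u x‖ ^ (2:ℝ)) 1 μ := by
        rw [eLpNorm_norm_rpow _ two_pos, one_mul, ENNReal.ofReal_ofNat]
    _ ≤ eLpNorm w 1 μ := eLpNorm_mono_ae_real (huw.mono fun x hx => by simpa using hx)
    _ = ENNReal.ofReal (∫ x, w x ∂μ) := by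
        rw [eLpNorm_one_eq_lintegral_enorm, ← ofReal_integral_norm_eq_lintegral_enorm hw,
          integral_congr_ae (hw0.mono fun x hx => Real.norm_of_nonneg hx)]
    _ = ENNReal.ofReal √(∫ x, w x ∂μ) ^ (2:ℝ) := by
        rw [ENNReal.ofReal_rpow_of_nonneg (Real.sqrt_nonneg _) zero_le_two, Real.rpow_two,
          Real.sq_sqrt (integral_nonneg_of_ae hw0)]

theorem Monotone.intervalIntegral_comp_add_sub_le {F : ℝ → ℝ} (hF : Monotone F) (a b : ℝ)
    {h : ℝ} (hh : 0 ≤ h) : ∫ x in a..b, (F (x + h) - F x) ≤ h * (F (b + h) - F a) := by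
  have hint : ∀ u v, IntervalIntegrable F volume u v := fun u v => hF.intervalIntegrable
  have hFh : Monotone fun x => F (x + h) := fun x y hxy => hF (by linarith)
  rw [intervalIntegral.integral_sub hFh.intervalIntegrable (hint a b),
    intervalIntegral.integral_comp_add_right]
  have h₁ := intervalIntegral.integral_add_adjacent_intervals (hint a (a + h))
    (hint (a + h) (b + h))
  have h₂ := intervalIntegral.integral_add_adjacent_intervals (hint a b) (hint b (b + h))
  have h₃ : ∫ x in b..b + h, F x ≤ h * F (b + h) := by
    simpa using intervalIntegral.integral_mono_on (g := fun _ => F (b + h))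
      (by linarith : b ≤ b + h) (hint _ _) intervalIntegrable_const fun x hx => hF hx.2
  have h₄ : h * F a ≤ ∫ x in a..a + h, F x := by
    simpa using intervalIntegral.integral_mono_on (f := fun _ => F a) (by linarith : a ≤ a + h)
      intervalIntegrable_const (hint _ _) fun x hx => hF hx.1
  nlinarith

instance : IsProbabilityMeasure mu01 :=
  ⟨by simp [mu01]⟩

theorem ae_mem_Ioo_mu01 : ∀ᵐ x ∂mu01, x ∈ Ioo (0:ℝ) 1 :=
  ae_restrict_mem measurableSet_Ioo

theorem exists_mem_Ioo_of_ae_mu01 {p : ℝ → Prop} (hp : ∀ᵐ x ∂mu01, p x) {a b : ℝ}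
    (ha : 0 ≤ a) (hab : a < b) (hb : b ≤ 1) : ∃ x ∈ Ioo a b, p x := by
  have hpos : mu01.restrict (Ioo a b) ≠ 0 := by
    rw [Ne, Measure.restrict_eq_zero, mu01, Measure.restrict_apply measurableSet_Ioo,
      inter_eq_left.2 (Ioo_subset_Ioo ha hb), Real.volume_Ioo]
    simpa using hab
  have := ae_neBot.2 hpos
  exact ((ae_restrict_mem measurableSet_Ioo).and (ae_restrict_of_ae hp)).exists

theorem isClosed_setOf_ae_eq_monotoneOn (p : ℝ≥0∞) [Fact (1 ≤ p)] :
    IsClosed {g : Lp ℝ p mu01 |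
      ∃ f : ℝ → ℝ, MonotoneOn f (Ioo 0 1) ∧ (g : ℝ → ℝ) =ᵐ[mu01] f} := by
  refine IsSeqClosed.isClosed fun gs g hgs hlim => ?_
  choose F hFmono hFae using hgs
  obtain ⟨ns, -, hae⟩ := (tendstoInMeasure_of_tendsto_Lp hlim).exists_seq_tendsto_ae
  set S := {x | x ∈ Ioo (0:ℝ) 1 ∧ Tendsto (fun i => F (ns i) x) atTop (𝓝 (g x))}
  have hS : ∀ᵐ x ∂mu01, x ∈ S := by
    filter_upwards [ae_mem_Ioo_mu01, hae, ae_all_iff.2 fun i => hFae (ns i)] with x hx hgx hFx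
    exact ⟨hx, hgx.congr hFx⟩
  have hmono : MonotoneOn g S := fun x hx y hy hxy =>
    le_of_tendsto_of_tendsto' hx.2 hy.2 fun i => hFmono (ns i) hx.1 hy.1 hxy
  have hdense : ∀ x ∈ Ioo (0:ℝ) 1, (∃ s ∈ S, s ≤ x) ∧ ∃ s ∈ S, x ≤ s := by
    intro x hx
    obtain ⟨s, hs, hsS⟩ := exists_mem_Ioo_of_ae_mu01 hS le_rfl hx.1 hx.2.le
    obtain ⟨t, ht, htS⟩ := exists_mem_Ioo_of_ae_mu01 hS hx.1.le hx.2 le_rfl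
    exact ⟨⟨s, hsS, hs.2.le⟩, t, htS, ht.1.le⟩
  obtain ⟨f, hf, hfg⟩ := hmono.exists_monotoneOn_extension hdense
  exact ⟨f, hf, hS.mono fun x hx => (hfg hx).symm⟩

-- `Fin.ofNat` reduces mod `n`; on `[0, 1)` the index is `⌊x n⌋` itself.
def stepFun (n : ℕ) [NeZero n] (c : Fin n → ℝ) (x : ℝ) : ℝ :=
  c (Fin.ofNat n ⌊x * n⌋₊)

theorem measurable_stepFun (n : ℕ) [NeZero n] (c : Fin n → ℝ) : Measurable (stepFun n c) :=
  (measurable_of_countable c).comp <| (measurable_of_countable (Fin.ofNat n)).comp <|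
    Nat.measurable_floor.comp (measurable_id.mul_const (n : ℝ))

theorem memLp_stepFun (n : ℕ) [NeZero n] (c : Fin n → ℝ) : MemLp (stepFun n c) 2 mu01 :=
  .of_bound (measurable_stepFun n c).aestronglyMeasurable ‖c‖
    (ae_of_all _ fun _ => norm_le_pi_norm c _)

def stepLp (n : ℕ) [NeZero n] (c : Fin n → ℝ) : Lp ℝ 2 mu01 :=
  (memLp_stepFun n c).toLp

theorem coeFn_stepLp (n : ℕ) [NeZero n] (c : Fin n → ℝ) : stepLp n c =ᵐ[mu01] stepFun n c :=
  (memLp_stepFun n c).coeFn_toLp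

theorem lipschitzWith_stepLp (n : ℕ) [NeZero n] : LipschitzWith 1 (stepLp n) := by
  refine LipschitzWith.of_dist_le_mul fun c d => ?_
  rw [Lp.dist_def, eLpNorm_congr_ae ((coeFn_stepLp n c).sub (coeFn_stepLp n d)),
    NNReal.coe_one, one_mul]
  refine ENNReal.toReal_le_of_le_ofReal dist_nonneg ?_
  refine (eLpNorm_le_of_ae_bound (ae_of_all _ fun x => dist_le_pi_dist c d _)).trans ?_
  simp

theorem Monotone.stepFun_mem_Icc {F : ℝ → ℝ} (hF : Monotone F) (n : ℕ) [NeZero n] {x : ℝ}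
    (hx : x ∈ Ico (0:ℝ) 1) :
    stepFun n (fun k => F ((k + 1 : ℕ) / n)) x ∈ Icc (F x) (F (x + (n:ℝ)⁻¹)) := by
  have hn : (0:ℝ) < n := Nat.cast_pos.2 (Nat.pos_of_neZero n)
  have hxn : 0 ≤ x * n := mul_nonneg hx.1 hn.le
  have hk : ⌊x * n⌋₊ < n := (Nat.floor_lt hxn).2 (by nlinarith [hx.2])
  simp only [stepFun, Fin.val_ofNat, Nat.mod_eq_of_lt hk]
  refine ⟨hF ((le_div_iff₀ hn).2 ?_), hF ?_⟩
  · push_cast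
    exact (Nat.lt_floor_add_one _).le
  · rw [div_le_iff₀ hn, add_mul, inv_mul_cancel₀ hn.ne']
    push_cast
    linarith [Nat.floor_le hxn]

theorem Monotone.eLpNorm_sub_stepFun_le {F : ℝ → ℝ} (hF : Monotone F) {M : ℝ}
    (hFM : ∀ x, |F x| ≤ M) (n : ℕ) [NeZero n] :
    eLpNorm (F - stepFun n fun k => F ((k + 1 : ℕ) / n)) 2 mu01 ≤
      ENNReal.ofReal (2 * M / √n) := by
  have hn : (0:ℝ) < n := Nat.cast_pos.2 (Nat.pos_of_neZero n)
  have hM : 0 ≤ M := (abs_nonneg _).trans (hFM 0)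
  set w : ℝ → ℝ := fun x => F (x + (n:ℝ)⁻¹) - F x
  have hpt : ∀ x ∈ Ioo (0:ℝ) 1,
      (F - stepFun n fun k => F ((k + 1 : ℕ) / n)) x ^ 2 ≤ 2 * M * w x := by
    intro x hx
    obtain ⟨h₁, h₂⟩ := hF.stepFun_mem_Icc n (Ioo_subset_Ico_self hx)
    have hw : w x ≤ 2 * M := by
      linarith [(abs_le.1 (hFM x)).1, (abs_le.1 (hFM (x + (n:ℝ)⁻¹))).2]
    rw [Pi.sub_apply]
    nlinarith
  have hint : Integrable w mu01 :=
    ((hF.comp (monotone_id.add_const _)).intervalIntegrable.sub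
      (hF.intervalIntegrable (a := 0) (b := 1))).1.mono_set Ioo_subset_Ioc_self
  have hw_int : ∫ x, w x ∂mu01 ≤ (n:ℝ)⁻¹ * (2 * M) := by
    have := hF.intervalIntegral_comp_add_sub_le 0 1 (inv_nonneg.2 hn.le)
    rw [intervalIntegral.integral_of_le zero_le_one, integral_Ioc_eq_integral_Ioo] at this
    refine this.trans (mul_le_mul_of_nonneg_left ?_ (inv_nonneg.2 hn.le))
    linarith [(abs_le.1 (hFM 0)).1, (abs_le.1 (hFM (1 + (n:ℝ)⁻¹))).2]
  refine (eLpNorm_two_le_ofReal_sqrt_integral (hint.const_mul (2 * M))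
    (ae_mem_Ioo_mu01.mono hpt)).trans (ENNReal.ofReal_le_ofReal ?_)
  rw [integral_const_mul, ← Real.sqrt_sq (by positivity : 0 ≤ 2 * M / √n)]
  refine Real.sqrt_le_sqrt ?_
  rw [div_pow, Real.sq_sqrt hn.le, div_eq_mul_inv]
  nlinarith

theorem totallyBounded_setOf_monotoneOn_eLpNorm_le (C : ℝ) {δ : ℝ} (hδ : 0 < δ) :
    TotallyBounded {g : Lp ℝ 2 mu01 |
      (∃ f : ℝ → ℝ, MonotoneOn f (Ioo 0 1) ∧ (g : ℝ → ℝ) =ᵐ[mu01] f) ∧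
      eLpNorm (g : ℝ → ℝ) (ENNReal.ofReal (2 + δ)) mu01 ≤ ENNReal.ofReal C} := by
  refine totallyBounded_of_forall_exists_totallyBounded fun ε hε => ?_
  obtain ⟨M, hM, htrunc⟩ := exists_forall_eLpNorm_sub_clamp_le mu01 two_pos
    (by linarith : (2:ℝ) < 2 + δ) (ENNReal.ofReal_ne_top (r := C))
    (ENNReal.ofReal_pos.2 (half_pos hε))
  rw [ENNReal.ofReal_ofNat] at htrunc
  obtain ⟨n, hn⟩ := exists_nat_gt ((4 * M / ε) ^ 2)
  have hn0 : (0:ℝ) < n := (sq_nonneg _).trans_lt hn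
  have : NeZero n := ⟨by exact_mod_cast hn0.ne'⟩
  have hstep : 2 * M / √n ≤ ε / 2 := by
    have h := Real.sqrt_lt_sqrt (sq_nonneg _) hn
    rw [Real.sqrt_sq (by positivity), div_lt_iff₀ hε] at h
    rw [div_le_iff₀ (Real.sqrt_pos.2 hn0)]
    linarith
  refine ⟨stepLp n '' univ.pi fun _ => Icc (-M) M,
    ((isCompact_univ_pi fun _ => isCompact_Icc).image
      (lipschitzWith_stepLp n).continuous).totallyBounded, ?_⟩
  rintro g ⟨⟨f, hf, hgf⟩, hgC⟩
  obtain ⟨F, hF, hFM, hFf⟩ := hf.exists_monotone_abs_le_eqOn_clamp hM.le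
  set c : Fin n → ℝ := fun k => F ((k + 1 : ℕ) / n)
  refine ⟨stepLp n c, mem_image_of_mem _ fun k _ => abs_le.1 (hFM _), ?_⟩
  have hsplit : ⇑g - ⇑(stepLp n c) =ᵐ[mu01]
      (fun x => f x - max (-M) (min M (f x))) + (F - stepFun n c) := by
    filter_upwards [hgf, coeFn_stepLp n c, ae_mem_Ioo_mu01] with x h₁ h₂ hx
    simp [h₁, h₂, hFf hx]
  have hfm : AEStronglyMeasurable f mu01 := (Lp.aestronglyMeasurable g).congr hgf
  rw [Lp.dist_def, eLpNorm_congr_ae hsplit]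
  refine ENNReal.toReal_le_of_le_ofReal hε.le ((eLpNorm_add_le ?_ ?_ one_le_two).trans ?_)
  · exact hfm.sub (by fun_prop)
  · exact (hF.measurable.sub (measurable_stepFun n c)).aestronglyMeasurable
  · calc _ ≤ ENNReal.ofReal (ε / 2) + ENNReal.ofReal (ε / 2) :=
          add_le_add (htrunc f (by rwa [← eLpNorm_congr_ae hgf]))
            ((hF.eLpNorm_sub_stepFun_le hFM n).trans (ENNReal.ofReal_le_ofReal hstep))
      _ = ENNReal.ofReal ε := by
        rw [← ENNReal.ofReal_add (half_pos hε).le (half_pos hε).le, add_halves]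

theorem stmt5_general (C δ : ℝ) (hδ : 0 < δ) :
    IsCompact {g : Lp ℝ 2 mu01 |
      (∃ f : ℝ → ℝ, MonotoneOn f (Set.Ioo (0:ℝ) 1) ∧ (g : ℝ → ℝ) =ᵐ[mu01] f) ∧
      eLpNorm (g : ℝ → ℝ) (ENNReal.ofReal (2 + δ)) mu01 ≤ ENNReal.ofReal C} :=
  (totallyBounded_setOf_monotoneOn_eLpNorm_le C hδ).isCompact_of_isClosed
    ((isClosed_setOf_ae_eq_monotoneOn 2).inter (isClosed_setOf_eLpNorm_le 2 _ _))

/-- for every `C > 0` and `δ > 0`, the set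
`K_C = {g ∈ L₂↑ : ‖g‖_{L^{2+δ}} ≤ C}` is compact in `L²(0,1)`. -/
theorem stmt5 (C δ : ℝ) (hC : 0 < C) (hδ : 0 < δ) :
    IsCompact {g : Lp ℝ 2 mu01 |
      (∃ f : ℝ → ℝ, MonotoneOn f (Set.Ioo (0:ℝ) 1) ∧ (g : ℝ → ℝ) =ᵐ[mu01] f) ∧
      eLpNorm (g : ℝ → ℝ) (ENNReal.ofReal (2 + δ)) mu01 ≤ ENNReal.ofReal C} :=
  stmt5_general C δ hδ
end
end

section
/- Let [a,b] ⊂ ℝ, let E be a Polish space, and let U = {a = u₀ < u₁ < ... < u_l = b} be a partition. Suppose (Xₙ) is a sequence of random elements of D([a,b], E) (càdlàg paths continuous at b), and that for each i the restricted processes Xₙ^{[u_{i-1},u_i]} (defined by Xₙ on [u_{i-1}, u_i) and by the left limit Xₙ(u_i−) at u_i) are tight in D([u_{i-1}, u_i], E). Then (Xₙ) is tight in D([a,b], E). -/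
open MeasureTheory Set Filter Topology
open scoped ENNReal

noncomputable section

variable {E : Type*} [MetricSpace E]

/-- Admissible time changes of `[a,b]`: strictly increasing bijections of `[a,b]`
fixing the endpoints. -/
def TimeChanges (a b : ℝ) : Set (ℝ → ℝ) :=
  {lam | StrictMonoOn lam (Set.Icc a b) ∧ lam '' Set.Icc a b = Set.Icc a b ∧
    lam a = a ∧ lam b = b}

/-- The quantity `γ(λ) = sup_{v<u} |log((λ(u)−λ(v))/(u−v))|` (valued in `ℝ≥0∞`). -/
def gammaTC (a b : ℝ) (lam : ℝ → ℝ) : ℝ≥0∞ :=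
  ⨆ (u : ℝ) (_ : u ∈ Set.Icc a b) (v : ℝ) (_ : v ∈ Set.Icc a b) (_ : v < u),
    ENNReal.ofReal |Real.log ((lam u - lam v) / (u - v))|

/-- The Skorohod distance on `D([a,b], E)`:
`d(f,g) = inf_λ max(γ(λ), sup_u dist(f(λ(u)), g(u)))`. -/
def skDist (a b : ℝ) (f g : ℝ → E) : ℝ≥0∞ :=
  ⨅ (lam : ℝ → ℝ) (_ : lam ∈ TimeChanges a b),
    max (gammaTC a b lam) (⨆ (u : ℝ) (_ : u ∈ Set.Icc a b), edist (f (lam u)) (g u))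

/-- `f` is càdlàg on `[a,b]` and continuous at `b` (membership in `D([a,b], E)`). -/
def Cadlag (a b : ℝ) (f : ℝ → E) : Prop :=
  (∀ u ∈ Set.Ico a b, Tendsto f (nhdsWithin u (Set.Ioc u b)) (nhds (f u))) ∧
  (∀ u ∈ Set.Ioc a b, ∃ l : E, Tendsto f (nhdsWithin u (Set.Ico a u)) (nhds l)) ∧
  Tendsto f (nhdsWithin b (Set.Icc a b)) (nhds (f b))

/-- Compactness (sequential, for the Skorohod metric) of a set `K ⊆ D([a,b], E)`. -/
def SkCompact (a b : ℝ) (K : Set (ℝ → E)) : Prop :=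
  (∀ f ∈ K, Cadlag a b f) ∧
  ∀ x : ℕ → ℝ → E, (∀ n, x n ∈ K) →
    ∃ f ∈ K, ∃ φ : ℕ → ℕ, StrictMono φ ∧
      Tendsto (fun n => skDist a b (x (φ n)) f) atTop (nhds 0)

/-- `g` is the restriction `f^{[c,d]}` of `f`: it agrees with `f` on `[c,d)` and takes
the left limit `f(d−)` at `d`. -/
def IsRestriction (c d : ℝ) (f g : ℝ → E) : Prop :=
  (∀ u ∈ Set.Ico c d, g u = f u) ∧ Tendsto f (nhdsWithin d (Set.Ico c d)) (nhds (g d))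

/-!
Choose compact sets `K i ⊆ D([u i, u (i+1)], E)` carrying all but `ε / l` of the mass of the
restricted processes and let `K` be the set of paths all of whose restrictions lie in the `K i`;
it carries all but `ε` of the mass of each `Xₙ`. `K` is compact: from a sequence in `K` a diagonal
extraction makes all restrictions converge, the limits glue to a path of `K`, and time changes of
the pieces (which fix the partition points) glue to a time change of `[a, b]` with `γ` at most the
largest of theirs, because `γ(λ) ≤ c` says exactly that `t ↦ λ t - e^{-c} t` and
`t ↦ e^c t - λ t` are nondecreasing.
-/

theorem StrictMonoOn.apply_lt_apply_succ {β : Type*} [Preorder β] {f : ℕ → β} {n i : ℕ}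
    (hf : StrictMonoOn f (Iic n)) (hi : i < n) : f i < f (i + 1) :=
  hf (mem_Iic.2 hi.le) (mem_Iic.2 hi) (Nat.lt_succ_self i)

theorem tendsto_nhdsWithin_of_eqOn_inter {α β : Type*} [TopologicalSpace α] {f g : α → β}
    {s t U : Set α} {x : α} {L : Filter β} (hg : Tendsto g (𝓝[t] x) L) (hU : U ∈ 𝓝 x)
    (hst : s ∩ U ⊆ t) (hfg : EqOn f g (s ∩ U)) : Tendsto f (𝓝[s] x) L := by
  rw [nhdsWithin_restrict' s hU]
  exact tendsto_nhdsWithin_congr (fun y hy => (hfg hy).symm) (hg.mono_left (nhdsWithin_mono _ hst))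

namespace Skorohod

theorem exists_strictMono_forall_tendsto {α : Type*} (m : ℕ) (K : ℕ → Set α)
    (d : ℕ → α → α → ℝ≥0∞)
    (hK : ∀ i < m, ∀ x : ℕ → α, (∀ n, x n ∈ K i) →
      ∃ f ∈ K i, ∃ φ : ℕ → ℕ, StrictMono φ ∧ Tendsto (fun n => d i (x (φ n)) f) atTop (𝓝 0))
    (G : ℕ → ℕ → α) (hG : ∀ i < m, ∀ n, G i n ∈ K i) :
    ∃ φ : ℕ → ℕ, StrictMono φ ∧ ∃ g : ℕ → α, ∀ i < m,
      g i ∈ K i ∧ Tendsto (fun n => d i (G i (φ n)) (g i)) atTop (𝓝 0) := by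
  induction m with
  | zero => exact ⟨id, strictMono_id, fun i => G i 0, by omega⟩
  | succ m ih =>
    obtain ⟨φ, hφ, g, hg⟩ := ih (fun i hi => hK i (by omega)) (fun i hi n => hG i (by omega) n)
    obtain ⟨f, hf, ψ, hψ, hconv⟩ := hK m (by omega) (fun n => G m (φ n))
      (fun n => hG m (by omega) (φ n))
    refine ⟨φ ∘ ψ, hφ.comp hψ, Function.update g m f, fun i hi => ?_⟩
    rcases (Nat.lt_succ_iff_lt_or_eq.mp hi) with hlt | rfl
    · rw [Function.update_of_ne hlt.ne]
      exact ⟨(hg i hlt).1, (hg i hlt).2.comp hψ.tendsto_atTop⟩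
    · rw [Function.update_self]
      exact ⟨hf, hconv⟩

section TimeChange

variable {a b : ℝ}

theorem gammaTC_le_iff {c : ℝ} {lam : ℝ → ℝ} (hlam : StrictMonoOn lam (Icc a b)) (hc : 0 ≤ c) :
    gammaTC a b lam ≤ ENNReal.ofReal c ↔
      MonotoneOn (fun t => lam t - Real.exp (-c) * t) (Icc a b) ∧
        MonotoneOn (fun t => Real.exp c * t - lam t) (Icc a b) := by
  have slope : ∀ v ∈ Icc a b, ∀ w ∈ Icc a b, v < w →
      (|Real.log ((lam w - lam v) / (w - v))| ≤ c ↔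
        Real.exp (-c) * (w - v) ≤ lam w - lam v ∧ lam w - lam v ≤ Real.exp c * (w - v)) := by
    intro v hv w hw hvw
    have hwv : 0 < w - v := sub_pos.2 hvw
    have hs : 0 < (lam w - lam v) / (w - v) := div_pos (sub_pos.2 (hlam hv hw hvw)) hwv
    rw [abs_le, Real.le_log_iff_exp_le hs, Real.log_le_iff_le_exp hs, le_div_iff₀ hwv,
      div_le_iff₀ hwv]
  simp only [gammaTC, iSup_le_iff, ENNReal.ofReal_le_ofReal_iff hc]
  constructor
  · intro h
    have bounds : ∀ v ∈ Icc a b, ∀ w ∈ Icc a b, v ≤ w →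
        Real.exp (-c) * (w - v) ≤ lam w - lam v ∧ lam w - lam v ≤ Real.exp c * (w - v) := by
      intro v hv w hw hvw
      rcases hvw.eq_or_lt with rfl | hlt
      · simp
      · exact (slope v hv w hw hlt).1 (h w hw v hv hlt)
    refine ⟨fun v hv w hw hvw => ?_, fun v hv w hw hvw => ?_⟩ <;>
      have := bounds v hv w hw hvw <;> dsimp only <;> linarith
  · rintro ⟨h₁, h₂⟩ w hw v hv hvw
    have e₁ := h₁ hv hw hvw.le
    have e₂ := h₂ hv hw hvw.le
    simp only at e₁ e₂
    exact (slope v hv w hw hvw).2 ⟨by linarith, by linarith⟩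

theorem exists_timeChange_of_skDist_lt {f g : ℝ → E} {δ : ℝ≥0∞} (h : skDist a b f g < δ) :
    ∃ lam ∈ TimeChanges a b, gammaTC a b lam ≤ δ ∧
      ∀ t ∈ Icc a b, edist (f (lam t)) (g t) ≤ δ := by
  simp only [skDist, iInf_lt_iff] at h
  obtain ⟨lam, hlam, hlt⟩ := h
  exact ⟨lam, hlam, (le_max_left _ _).trans hlt.le,
    fun t ht => (le_iSup₂ (f := fun t (_ : t ∈ Icc a b) => edist (f (lam t)) (g t)) t ht).trans
      ((le_max_right _ _).trans hlt.le)⟩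

theorem skDist_le_of_timeChange {f g : ℝ → E} {δ : ℝ≥0∞} {lam : ℝ → ℝ}
    (hlam : lam ∈ TimeChanges a b) (hγ : gammaTC a b lam ≤ δ)
    (hd : ∀ t ∈ Icc a b, edist (f (lam t)) (g t) ≤ δ) : skDist a b f g ≤ δ :=
  iInf₂_le_of_le lam hlam (max_le hγ (iSup₂_le hd))

end TimeChange

section Partition

variable {l : ℕ} {u : ℕ → ℝ} {i : ℕ} {t : ℝ}

def pieceIndex (l : ℕ) (u : ℕ → ℝ) (t : ℝ) : ℕ :=
  Nat.findGreatest (fun i => u i ≤ t) (l - 1)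

def piece (l : ℕ) (u : ℕ → ℝ) (i : ℕ) : Set ℝ :=
  {t | u i ≤ t ∧ (t < u (i + 1) ∨ i + 1 = l ∧ t = u (i + 1))}

def glue {α : Type*} (l : ℕ) (u : ℕ → ℝ) (g : ℕ → ℝ → α) (t : ℝ) : α :=
  g (pieceIndex l u t) t

theorem Ico_subset_piece : Ico (u i) (u (i + 1)) ⊆ piece l u i :=
  fun _ ht => ⟨ht.1, Or.inl ht.2⟩

theorem piece_subset_Icc : piece l u i ⊆ Icc (u i) (u (i + 1)) := by
  rintro t ⟨h₁, h₂ | ⟨-, rfl⟩⟩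
  exacts [⟨h₁, h₂.le⟩, ⟨h₁, le_rfl⟩]

theorem Icc_succ_subset_Icc_zero (hu : StrictMonoOn u (Iic l)) (hi : i < l) :
    Icc (u i) (u (i + 1)) ⊆ Icc (u 0) (u l) :=
  Icc_subset_Icc (hu.monotoneOn (mem_Iic.2 (Nat.zero_le l)) (mem_Iic.2 hi.le) (Nat.zero_le i))
    (hu.monotoneOn (mem_Iic.2 hi) self_mem_Iic hi)

theorem pieceIndex_eq (hu : StrictMonoOn u (Iic l)) (hi : i < l) (ht : t ∈ piece l u i) :
    pieceIndex l u t = i := by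
  rw [pieceIndex, Nat.findGreatest_eq_iff]
  refine ⟨by omega, fun _ => ht.1, fun j hij hjl hj => ?_⟩
  rcases ht.2 with h | ⟨hil, -⟩
  · have := hu.monotoneOn (mem_Iic.2 hi) (mem_Iic.2 (by omega)) hij
    linarith
  · omega

theorem pieceIndex_lt_and_mem_piece (hl : 0 < l) (ht : t ∈ Icc (u 0) (u l)) :
    pieceIndex l u t < l ∧ t ∈ piece l u (pieceIndex l u t) := by
  have hle : pieceIndex l u t ≤ l - 1 := Nat.findGreatest_le _
  refine ⟨by omega, Nat.findGreatest_spec (P := fun i => u i ≤ t) (Nat.zero_le _) ht.1, ?_⟩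
  by_cases hlast : pieceIndex l u t + 1 = l
  · rw [hlast]
    rcases ht.2.lt_or_eq with h | h
    exacts [Or.inl h, Or.inr ⟨rfl, h⟩]
  · exact Or.inl (lt_of_not_ge (Nat.findGreatest_is_greatest (P := fun i => u i ≤ t)
      (Nat.lt_succ_self _) (by omega)))

theorem exists_mem_Ioc_succ (ht : t ∈ Ioc (u 0) (u l)) : ∃ i < l, t ∈ Ioc (u i) (u (i + 1)) := by
  induction l with
  | zero => exact absurd (ht.1.trans_le ht.2) (lt_irrefl _)
  | succ m ih =>
    by_cases h : t ≤ u m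
    · obtain ⟨i, hi, hti⟩ := ih ⟨ht.1, h⟩
      exact ⟨i, by omega, hti⟩
    · exact ⟨m, by omega, lt_of_not_ge h, ht.2⟩

theorem monotoneOn_Icc_of_monotoneOn_pieces {β : Type*} [Preorder β] {f : ℝ → β}
    (hu : MonotoneOn u (Iic l)) (hf : ∀ i < l, MonotoneOn f (Icc (u i) (u (i + 1)))) :
    MonotoneOn f (Icc (u 0) (u l)) := by
  induction l with
  | zero =>
    intro x hx y hy _
    rw [Icc_self, mem_singleton_iff] at hx hy
    rw [hx, hy]
  | succ m ih =>
    have h₀ : u 0 ≤ u m := hu (mem_Iic.2 (Nat.zero_le _)) (mem_Iic.2 m.le_succ) (Nat.zero_le m)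
    have h₁ : u m ≤ u (m + 1) := hu (mem_Iic.2 m.le_succ) self_mem_Iic m.le_succ
    rw [← Icc_union_Icc_eq_Icc h₀ h₁]
    exact (ih (hu.mono (Iic_subset_Iic.2 m.le_succ)) fun i hi => hf i (by omega)).union_right
      (hf m (by omega)) (isGreatest_Icc h₀) (isLeast_Icc h₁)

theorem glue_eqOn_piece {α : Type*} {g : ℕ → ℝ → α} (hu : StrictMonoOn u (Iic l)) (hi : i < l) :
    EqOn (glue l u g) (g i) (piece l u i) := fun t ht => by
  rw [glue, pieceIndex_eq hu hi ht]

end Partition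

section Glue

variable {l : ℕ} {u : ℕ → ℝ} {i : ℕ}

theorem mapsTo_piece_of_mem_timeChanges {lam : ℝ → ℝ}
    (hlam : lam ∈ TimeChanges (u i) (u (i + 1))) : MapsTo lam (piece l u i) (piece l u i) := by
  obtain ⟨hmono, -, hleft, hright⟩ := hlam
  rintro t ⟨h₁, h₂ | ⟨hil, rfl⟩⟩
  · have hle : u i ≤ u (i + 1) := h₁.trans h₂.le
    refine ⟨?_, Or.inl ?_⟩
    · calc u i = lam (u i) := hleft.symm
        _ ≤ lam t := hmono.monotoneOn ⟨le_rfl, hle⟩ ⟨h₁, h₂.le⟩ h₁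
    · calc lam t < lam (u (i + 1)) := hmono ⟨h₁, h₂.le⟩ ⟨hle, le_rfl⟩ h₂
        _ = u (i + 1) := hright
  · rw [hright]
    exact ⟨h₁, Or.inr ⟨hil, rfl⟩⟩

variable {lams : ℕ → ℝ → ℝ} {c : ℝ}

/-- Consecutive time changes agree at the common endpoint, so the glued one coincides with each
of them on the whole closed piece. -/
theorem glue_eqOn_Icc_of_mem_timeChanges (hu : StrictMonoOn u (Iic l))
    (hlam : ∀ i < l, lams i ∈ TimeChanges (u i) (u (i + 1))) (hi : i < l) :
    EqOn (glue l u lams) (lams i) (Icc (u i) (u (i + 1))) := by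
  intro t ht
  rcases ht.2.lt_or_eq with h | rfl
  · exact glue_eqOn_piece hu hi ⟨ht.1, Or.inl h⟩
  by_cases hlast : i + 1 = l
  · exact glue_eqOn_piece hu hi ⟨ht.1, Or.inr ⟨hlast, rfl⟩⟩
  have hi' : i + 1 < l := by omega
  rw [glue_eqOn_piece hu hi' ⟨le_rfl, Or.inl (hu.apply_lt_apply_succ hi')⟩, (hlam _ hi').2.2.1,
    (hlam i hi).2.2.2]

theorem glue_mem_timeChanges (hl : 0 < l) (hu : StrictMonoOn u (Iic l))
    (hlam : ∀ i < l, lams i ∈ TimeChanges (u i) (u (i + 1))) (hc : 0 ≤ c)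
    (hγ : ∀ i < l, gammaTC (u i) (u (i + 1)) (lams i) ≤ ENNReal.ofReal c) :
    glue l u lams ∈ TimeChanges (u 0) (u l) ∧
      gammaTC (u 0) (u l) (glue l u lams) ≤ ENNReal.ofReal c := by
  have heq i (hi : i < l) := glue_eqOn_Icc_of_mem_timeChanges hu hlam hi
  have hmon i (hi : i < l) := (gammaTC_le_iff (hlam i hi).1 hc).1 (hγ i hi)
  have h₁ : MonotoneOn (fun t => glue l u lams t - Real.exp (-c) * t) (Icc (u 0) (u l)) :=
    monotoneOn_Icc_of_monotoneOn_pieces hu.monotoneOn fun i hi =>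
      (hmon i hi).1.congr fun t ht => by simp only [heq i hi ht]
  have h₂ : MonotoneOn (fun t => Real.exp c * t - glue l u lams t) (Icc (u 0) (u l)) :=
    monotoneOn_Icc_of_monotoneOn_pieces hu.monotoneOn fun i hi =>
      (hmon i hi).2.congr fun t ht => by simp only [heq i hi ht]
  have hsm : StrictMonoOn (glue l u lams) (Icc (u 0) (u l)) := fun v hv w hw hvw => by
    have := h₁ hv hw hvw.le
    have : 0 < Real.exp (-c) * (w - v) := mul_pos (Real.exp_pos _) (sub_pos.2 hvw)
    simp only at *
    linarith
  obtain ⟨m, rfl⟩ : ∃ m, l = m + 1 := ⟨l - 1, by omega⟩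
  refine ⟨⟨hsm, Subset.antisymm ?_ fun s hs => ?_, ?_, ?_⟩, (gammaTC_le_iff hsm hc).2 ⟨h₁, h₂⟩⟩
  · rintro _ ⟨t, ht, rfl⟩
    obtain ⟨hi, htp⟩ := pieceIndex_lt_and_mem_piece hl ht
    have htI := piece_subset_Icc htp
    rw [heq _ hi htI]
    exact Icc_succ_subset_Icc_zero hu hi ((hlam _ hi).2.1 ▸ mem_image_of_mem _ htI)
  · obtain ⟨hi, hsp⟩ := pieceIndex_lt_and_mem_piece hl hs
    generalize pieceIndex (m + 1) u s = i at hi hsp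
    obtain ⟨t, ht, rfl⟩ := (hlam _ hi).2.1.symm ▸ piece_subset_Icc hsp
    exact ⟨t, Icc_succ_subset_Icc_zero hu hi ht, heq _ hi ht⟩
  · rw [heq 0 hl ⟨le_rfl, (hu.apply_lt_apply_succ hl).le⟩, (hlam 0 hl).2.2.1]
  · rw [heq m (Nat.lt_succ_self m) ⟨(hu.apply_lt_apply_succ (Nat.lt_succ_self m)).le, le_rfl⟩,
      (hlam m (Nat.lt_succ_self m)).2.2.2]

end Glue

section Paths

variable {l : ℕ} {u : ℕ → ℝ} {i : ℕ}

theorem eqOn_piece_of_isRestriction {f g : ℝ → E} (hu : StrictMonoOn u (Iic l)) (hi : i < l)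
    (hf : Cadlag (u 0) (u l) f) (hr : IsRestriction (u i) (u (i + 1)) f g) :
    EqOn f g (piece l u i) := by
  rintro t ⟨h₁, h₂ | ⟨rfl, rfl⟩⟩
  · exact (hr.1 t ⟨h₁, h₂⟩).symm
  have := right_nhdsWithin_Ico_neBot (hu.apply_lt_apply_succ hi)
  refine tendsto_nhds_unique (hf.2.2.mono_left (nhdsWithin_mono _ ?_)) hr.2
  exact Ico_subset_Icc_self.trans (Icc_succ_subset_Icc_zero hu hi)

variable {g : ℕ → ℝ → E}

theorem cadlag_glue (hl : 0 < l) (hu : StrictMonoOn u (Iic l))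
    (hg : ∀ i < l, Cadlag (u i) (u (i + 1)) (g i)) : Cadlag (u 0) (u l) (glue l u g) := by
  refine ⟨fun t ht => ?_, fun t ht => ?_, ?_⟩
  · obtain ⟨hi, htp⟩ := pieceIndex_lt_and_mem_piece hl (Ico_subset_Icc_self ht)
    generalize pieceIndex l u t = i at hi htp
    have ht' : t < u (i + 1) := by
      rcases htp.2 with h | ⟨rfl, rfl⟩
      exacts [h, absurd ht.2 (lt_irrefl _)]
    rw [show glue l u g t = g i t from glue_eqOn_piece hu hi htp]
    exact tendsto_nhdsWithin_of_eqOn_inter ((hg i hi).1 t ⟨htp.1, ht'⟩) (Iio_mem_nhds ht')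
      (fun s hs => ⟨hs.1.1, hs.2.le⟩)
      (fun s hs => glue_eqOn_piece hu hi (Ico_subset_piece ⟨htp.1.trans hs.1.1.le, hs.2⟩))
  · obtain ⟨i, hi, hti⟩ := exists_mem_Ioc_succ ht
    obtain ⟨L, hL⟩ := (hg i hi).2.1 t hti
    exact ⟨L, tendsto_nhdsWithin_of_eqOn_inter hL (Ioi_mem_nhds hti.1)
      (fun s hs => ⟨hs.2.le, hs.1.2⟩)
      (fun s hs => glue_eqOn_piece hu hi (Ico_subset_piece ⟨hs.2.le, hs.1.2.trans_le hti.2⟩))⟩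
  · obtain ⟨m, rfl⟩ : ∃ m, l = m + 1 := ⟨l - 1, by omega⟩
    have hm : m < m + 1 := Nat.lt_succ_self m
    have hlast : EqOn (glue (m + 1) u g) (g m) (Icc (u m) (u (m + 1))) := fun s hs =>
      glue_eqOn_piece hu hm (by
        rcases hs.2.lt_or_eq with h | h
        exacts [⟨hs.1, Or.inl h⟩, ⟨hs.1, Or.inr ⟨rfl, h⟩⟩])
    rw [hlast ⟨(hu.apply_lt_apply_succ hm).le, le_rfl⟩]
    exact tendsto_nhdsWithin_of_eqOn_inter (hg m hm).2.2
      (Ioi_mem_nhds (hu.apply_lt_apply_succ hm)) (fun s hs => ⟨hs.2.le, hs.1.2⟩)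
      (fun s hs => hlast ⟨hs.2.le, hs.1.2⟩)

theorem isRestriction_glue (hu : StrictMonoOn u (Iic l))
    (hg : ∀ i < l, Cadlag (u i) (u (i + 1)) (g i)) (hi : i < l) :
    IsRestriction (u i) (u (i + 1)) (glue l u g) (g i) :=
  ⟨fun _ ht => (glue_eqOn_piece hu hi (Ico_subset_piece ht)).symm,
    tendsto_nhdsWithin_congr (fun _ ht => (glue_eqOn_piece hu hi (Ico_subset_piece ht)).symm)
      ((hg i hi).2.2.mono_left (nhdsWithin_mono _ Ico_subset_Icc_self))⟩

theorem skDist_le_of_restrictions {x f : ℝ → E} {G : ℕ → ℝ → E} {c : ℝ} (hl : 0 < l)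
    (hu : StrictMonoOn u (Iic l)) (hx : Cadlag (u 0) (u l) x) (hf : Cadlag (u 0) (u l) f)
    (hG : ∀ i < l, IsRestriction (u i) (u (i + 1)) x (G i))
    (hg : ∀ i < l, IsRestriction (u i) (u (i + 1)) f (g i)) (hc : 0 ≤ c)
    (hd : ∀ i < l, skDist (u i) (u (i + 1)) (G i) (g i) < ENNReal.ofReal c) :
    skDist (u 0) (u l) x f ≤ ENNReal.ofReal c := by
  choose! lams hlam hγ hdist using fun i (hi : i < l) => exists_timeChange_of_skDist_lt (hd i hi)
  refine skDist_le_of_timeChange (glue_mem_timeChanges hl hu hlam hc hγ).1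
    (glue_mem_timeChanges hl hu hlam hc hγ).2 fun t ht => ?_
  obtain ⟨hi, htp⟩ := pieceIndex_lt_and_mem_piece hl ht
  generalize pieceIndex l u t = i at hi htp
  have hlamt := mapsTo_piece_of_mem_timeChanges (hlam i hi) htp
  rw [glue_eqOn_piece hu hi htp, eqOn_piece_of_isRestriction hu hi hx (hG i hi) hlamt,
    eqOn_piece_of_isRestriction hu hi hf (hg i hi) htp]
  exact hdist i hi t (piece_subset_Icc htp)

def restrictionsIn (l : ℕ) (u : ℕ → ℝ) (K : ℕ → Set (ℝ → E)) : Set (ℝ → E) :=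
  {f | Cadlag (u 0) (u l) f ∧ ∀ i < l, ∃ g ∈ K i, IsRestriction (u i) (u (i + 1)) f g}

theorem skCompact_restrictionsIn {K : ℕ → Set (ℝ → E)} (hl : 0 < l)
    (hu : StrictMonoOn u (Iic l)) (hK : ∀ i < l, SkCompact (u i) (u (i + 1)) (K i)) :
    SkCompact (u 0) (u l) (restrictionsIn l u K) := by
  refine ⟨fun f hf => hf.1, fun x hx => ?_⟩
  have hrestr i n : ∃ g, i < l → g ∈ K i ∧ IsRestriction (u i) (u (i + 1)) (x n) g := by
    by_cases hi : i < l
    · obtain ⟨g, hgK, hg⟩ := (hx n).2 i hi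
      exact ⟨g, fun _ => ⟨hgK, hg⟩⟩
    · exact ⟨x n, fun h => absurd h hi⟩
  choose G hG using hrestr
  obtain ⟨φ, hφ, g, hg⟩ := exists_strictMono_forall_tendsto l K
    (fun i => skDist (u i) (u (i + 1))) (fun i hi => (hK i hi).2) G
    fun i hi n => (hG i n hi).1
  have hgcad i (hi : i < l) : Cadlag (u i) (u (i + 1)) (g i) := (hK i hi).1 _ (hg i hi).1
  refine ⟨glue l u g, ⟨cadlag_glue hl hu hgcad, fun i hi =>
    ⟨g i, (hg i hi).1, isRestriction_glue hu hgcad hi⟩⟩, φ, hφ, ?_⟩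
  refine ENNReal.tendsto_nhds_zero.2 fun δ hδ => ?_
  obtain ⟨c, hc, hc₀, hcδ⟩ := ENNReal.lt_iff_exists_real_btwn.1 hδ
  have hev : ∀ᶠ n in atTop, ∀ i ∈ Iio l,
      skDist (u i) (u (i + 1)) (G i (φ n)) (g i) < ENNReal.ofReal c :=
    (finite_Iio l).eventually_all.2 fun i hi => ((hg i hi).2).eventually_lt_const hc₀
  filter_upwards [hev] with n hn
  exact (skDist_le_of_restrictions hl hu (hx (φ n)).1 (cadlag_glue hl hu hgcad)
    (fun i hi => (hG i (φ n) hi).2) (fun i hi => isRestriction_glue hu hgcad hi) hc hn).trans hcδ.le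

theorem measure_notMem_restrictionsIn_le {Ω : Type*} [MeasurableSpace Ω] (μ : Measure Ω)
    {K : ℕ → Set (ℝ → E)} {X : Ω → ℝ → E} {Xr : ℕ → Ω → ℝ → E}
    (hX : ∀ ω, Cadlag (u 0) (u l) (X ω))
    (hXr : ∀ i < l, ∀ ω, IsRestriction (u i) (u (i + 1)) (X ω) (Xr i ω)) :
    μ {ω | X ω ∉ restrictionsIn l u K} ≤ ∑ i ∈ Finset.range l, μ {ω | Xr i ω ∉ K i} := by
  refine (measure_mono fun ω hω => ?_).trans (measure_biUnion_finset_le _ _)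
  simp only [mem_iUnion, Finset.mem_range, exists_prop]
  by_contra! hnot
  exact hω ⟨hX ω, fun i hi => ⟨Xr i ω, by simpa using hnot i hi, hXr i hi ω⟩⟩

end Paths

end Skorohod

theorem stmt15_general
    {Ω : Type*} [MeasurableSpace Ω] (P : Measure Ω)
    (a b : ℝ) (l : ℕ) (hl : 0 < l) (u : ℕ → ℝ)
    (hu0 : u 0 = a) (hul : u l = b) (humono : ∀ i < l, u i < u (i + 1))
    (X : ℕ → Ω → ℝ → E) (Xr : ℕ → ℕ → Ω → ℝ → E)
    (hcad : ∀ n ω, Cadlag a b (X n ω))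
    (hrestr : ∀ i < l, ∀ n ω, IsRestriction (u i) (u (i + 1)) (X n ω) (Xr i n ω))
    (htight : ∀ i < l, ∀ ε : ℝ, 0 < ε →
      ∃ K, SkCompact (u i) (u (i + 1)) K ∧
        ∀ n, P {ω | Xr i n ω ∉ K} ≤ ENNReal.ofReal ε) :
    ∀ ε : ℝ, 0 < ε →
      ∃ K, SkCompact a b K ∧ ∀ n, P {ω | X n ω ∉ K} ≤ ENNReal.ofReal ε := by
  intro ε hε
  subst hu0 hul
  have hu : StrictMonoOn u (Iic l) := strictMonoOn_Iic_of_lt_succ humono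
  choose! K hK hPK using fun i (hi : i < l) => htight i hi (ε / l) (by positivity)
  refine ⟨Skorohod.restrictionsIn l u K, Skorohod.skCompact_restrictionsIn hl hu hK, fun n => ?_⟩
  calc P {ω | X n ω ∉ Skorohod.restrictionsIn l u K}
      ≤ ∑ i ∈ Finset.range l, P {ω | Xr i n ω ∉ K i} :=
        Skorohod.measure_notMem_restrictionsIn_le P (hcad n) fun i hi => hrestr i hi n
    _ ≤ ∑ _i ∈ Finset.range l, ENNReal.ofReal (ε / l) :=
        Finset.sum_le_sum fun i hi => hPK i (Finset.mem_range.1 hi) n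
    _ = ENNReal.ofReal ε := by
        rw [Finset.sum_const, Finset.card_range, nsmul_eq_mul, ← ENNReal.ofReal_natCast,
          ← ENNReal.ofReal_mul (Nat.cast_nonneg l), mul_div_cancel₀ ε (by positivity)]

/-- if, for each interval of a finite partition
`a = u₀ < … < u_l = b`, the restricted processes `Xₙ^{[u_{i-1},u_i]}` are tight in
`D([u_{i-1}, u_i], E)`, then `(Xₙ)` is tight in `D([a,b], E)`. -/
theorem stmt15 [CompleteSpace E] [TopologicalSpace.SeparableSpace E]
    {Ω : Type*} [MeasurableSpace Ω] (P : Measure Ω) [IsProbabilityMeasure P]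
    (a b : ℝ) (hab : a < b) (l : ℕ) (hl : 0 < l) (u : ℕ → ℝ)
    (hu0 : u 0 = a) (hul : u l = b) (humono : ∀ i < l, u i < u (i + 1))
    (X : ℕ → Ω → ℝ → E) (Xr : ℕ → ℕ → Ω → ℝ → E)
    (hcad : ∀ n ω, Cadlag a b (X n ω))
    (hrestr : ∀ i < l, ∀ n ω, IsRestriction (u i) (u (i + 1)) (X n ω) (Xr i n ω))
    (htight : ∀ i < l, ∀ ε : ℝ, 0 < ε →
      ∃ K, SkCompact (u i) (u (i + 1)) K ∧
        ∀ n, P {ω | Xr i n ω ∉ K} ≤ ENNReal.ofReal ε) :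
    ∀ ε : ℝ, 0 < ε →
      ∃ K, SkCompact a b K ∧ ∀ n, P {ω | X n ω ∉ K} ≤ ENNReal.ofReal ε :=
  stmt15_general P a b l hl u hu0 hul humono X Xr hcad hrestr htight
end
end

section
/- Let K_i be a compact subset of D([u_{i-1}, u_i], E) for each i in a finite partition a = u₀ < ... < u_l = b of [a,b], where E is a Polish space. Then the set K = {f ∈ D([a,b], E) : f^{[u_{i-1},u_i]} ∈ K_i for all i} is compact in D([a,b], E), where f^{[c,d]} denotes the restriction of f to [c,d) extended by the left limit f(d−) at d. -/
/-!
Induction on the number of pieces reduces the theorem to gluing two pieces `[a, c]` and `[c, b]`.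
Given a sequence in the glued set, extract a subsequence whose restrictions to `[a, c]` converge,
then a further one whose restrictions to `[c, b]` converge. Gluing near-optimal time changes of the
two pieces at their common fixed point `c` gives a time change of `[a, b]`: its sup-distance is the
larger of the two, and the slope of a chord across `c` is a mediant of slopes of chords of the two
pieces, so its `γ` is the larger of the two `γ`s as well. Hence the Skorohod distance to the glued
limit is at most the larger of the two distances, which tends to `0`.
-/

open MeasureTheory Set Filter Topology
open scoped ENNReal

noncomputable section

variable {E : Type*} [MetricSpace E]

lemma abs_log_add_div_add_le {p₁ q₁ p₂ q₂ : ℝ} (hp₁ : 0 < p₁) (hq₁ : 0 < q₁) (hp₂ : 0 < p₂)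
    (hq₂ : 0 < q₂) :
    |Real.log ((p₁ + p₂) / (q₁ + q₂))| ≤ max |Real.log (p₁ / q₁)| |Real.log (p₂ / q₂)| := by
  wlog h : p₁ / q₁ ≤ p₂ / q₂ generalizing p₁ q₁ p₂ q₂
  · rw [add_comm p₁, add_comm q₁, max_comm]
    exact this hp₂ hq₂ hp₁ hq₁ (le_of_not_ge h)
  rw [div_le_div_iff₀ hq₁ hq₂] at h
  have hq : 0 < q₁ + q₂ := add_pos hq₁ hq₂
  have h₁ : p₁ / q₁ ≤ (p₁ + p₂) / (q₁ + q₂) := by rw [div_le_div_iff₀ hq₁ hq]; nlinarith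
  have h₂ : (p₁ + p₂) / (q₁ + q₂) ≤ p₂ / q₂ := by rw [div_le_div_iff₀ hq hq₂]; nlinarith
  exact abs_le_max_abs_abs (Real.log_le_log (div_pos hp₁ hq₁) h₁)
    (Real.log_le_log (h₁.trans_lt' (div_pos hp₁ hq₁)) h₂)

lemma piecewise_Iio_eqOn_Iic {α : Type*} {c : ℝ} {f g : ℝ → α} (hc : g c = f c) :
    EqOn ((Iio c).piecewise f g) f (Iic c) := by
  intro t ht
  obtain rfl | htc := (mem_Iic.1 ht).eq_or_lt
  · rw [piecewise_eq_of_notMem (Iio t) f g (lt_irrefl t), hc]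
  · exact piecewise_eq_of_mem _ _ _ htc

lemma piecewise_Iio_eqOn_Ici {α : Type*} (c : ℝ) (f g : ℝ → α) :
    EqOn ((Iio c).piecewise f g) g (Ici c) :=
  fun _ ht => piecewise_eq_of_notMem _ _ _ (not_lt.2 (mem_Ici.1 ht))

variable {a b c d : ℝ}

section TimeChanges

variable {lam lam₁ lam₂ : ℝ → ℝ}

lemma TimeChanges.mapsTo (h : lam ∈ TimeChanges a b) : MapsTo lam (Icc a b) (Icc a b) :=
  fun _ ht => h.2.1 ▸ mem_image_of_mem lam ht

lemma TimeChanges.piecewise_mem (h₁ : lam₁ ∈ TimeChanges a c) (h₂ : lam₂ ∈ TimeChanges c b)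
    (hac : a ≤ c) (hcb : c ≤ b) : (Iio c).piecewise lam₁ lam₂ ∈ TimeChanges a b := by
  have e₁ : EqOn ((Iio c).piecewise lam₁ lam₂) lam₁ (Icc a c) :=
    (piecewise_Iio_eqOn_Iic (h₂.2.2.1.trans h₁.2.2.2.symm)).mono fun _ ht => ht.2
  have e₂ : EqOn ((Iio c).piecewise lam₁ lam₂) lam₂ (Icc c b) :=
    (piecewise_Iio_eqOn_Ici c lam₁ lam₂).mono fun _ ht => ht.1
  rw [TimeChanges, mem_ofPred_eq, ← Icc_union_Icc_eq_Icc hac hcb, image_union, e₁.image_eq,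
    e₂.image_eq, h₁.2.1, h₂.2.1, e₁ ⟨le_rfl, hac⟩, e₂ ⟨hcb, le_rfl⟩, h₁.2.2.1, h₂.2.2.2]
  exact ⟨(h₁.1.congr e₁.symm).union (h₂.1.congr e₂.symm) (isGreatest_Icc hac) (isLeast_Icc hcb),
    rfl, rfl, rfl⟩

lemma le_gammaTC (lam : ℝ → ℝ) {p q : ℝ} (hp : p ∈ Icc a b) (hq : q ∈ Icc a b) (hqp : q < p) :
    ENNReal.ofReal |Real.log ((lam p - lam q) / (p - q))| ≤ gammaTC a b lam :=
  le_iSup₂_of_le p hp <| le_iSup₂_of_le q hq <| le_iSup_of_le hqp le_rfl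

lemma gammaTC_le {lam : ℝ → ℝ} {M : ℝ≥0∞}
    (h : ∀ p ∈ Icc a b, ∀ q ∈ Icc a b, q < p →
      ENNReal.ofReal |Real.log ((lam p - lam q) / (p - q))| ≤ M) :
    gammaTC a b lam ≤ M :=
  iSup₂_le fun p hp => iSup₂_le fun q hq => iSup_le fun hqp => h p hp q hq hqp

lemma gammaTC_piecewise_le (h₁ : lam₁ ∈ TimeChanges a c) (h₂ : lam₂ ∈ TimeChanges c b) :
    gammaTC a b ((Iio c).piecewise lam₁ lam₂) ≤ max (gammaTC a c lam₁) (gammaTC c b lam₂) := by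
  have hc : lam₂ c = lam₁ c := h₂.2.2.1.trans h₁.2.2.2.symm
  refine gammaTC_le fun p hp q hq hqp => ?_
  rcases le_or_gt p c with hpc | hcp
  · have hq' : q ∈ Icc a c := ⟨hq.1, hqp.le.trans hpc⟩
    rw [piecewise_Iio_eqOn_Iic hc hpc, piecewise_Iio_eqOn_Iic hc hq'.2]
    exact le_max_of_le_left (le_gammaTC lam₁ ⟨hp.1, hpc⟩ hq' hqp)
  rcases le_or_gt c q with hcq | hqc
  · have hp' : p ∈ Icc c b := ⟨hcp.le, hp.2⟩
    rw [piecewise_Iio_eqOn_Ici c lam₁ lam₂ hp'.1, piecewise_Iio_eqOn_Ici c lam₁ lam₂ hcq]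
    exact le_max_of_le_right (le_gammaTC lam₂ hp' ⟨hcq, hqp.le.trans hp.2⟩ hqp)
  have hcb : c ∈ Icc c b := ⟨le_rfl, hcp.le.trans hp.2⟩
  have hca : c ∈ Icc a c := ⟨hq.1.trans hqc.le, le_rfl⟩
  have hp' : p ∈ Icc c b := ⟨hcp.le, hp.2⟩
  have hq' : q ∈ Icc a c := ⟨hq.1, hqc.le⟩
  -- a chord across `c` splits at `c` into a chord of each piece
  rw [piecewise_Iio_eqOn_Ici c lam₁ lam₂ hp'.1, piecewise_Iio_eqOn_Iic hc hq'.2,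
    show lam₂ p - lam₁ q = (lam₂ p - lam₂ c) + (lam₁ c - lam₁ q) by rw [hc]; ring,
    show p - q = (p - c) + (c - q) by ring]
  refine (ENNReal.ofReal_le_ofReal (abs_log_add_div_add_le (sub_pos.2 (h₂.1 hcb hp' hcp))
    (sub_pos.2 hcp) (sub_pos.2 (h₁.1 hq' hca hqc)) (sub_pos.2 hqc))).trans ?_
  rw [ENNReal.ofReal_max]
  exact max_le_max (le_gammaTC lam₂ hp' hcb hcp) (le_gammaTC lam₁ hca hq' hqc) |>.trans
    (max_comm _ _).le

end TimeChanges

section Skorohod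

variable {x y z f g : ℝ → E}

def skCost (a b : ℝ) (f g : ℝ → E) (lam : ℝ → ℝ) : ℝ≥0∞ :=
  max (gammaTC a b lam) (⨆ t ∈ Icc a b, edist (f (lam t)) (g t))

lemma skDist_eq_iInf_skCost :
    skDist a b f g = ⨅ lam ∈ TimeChanges a b, skCost a b f g lam := rfl

lemma exists_skCost_lt {C : ℝ≥0∞} (h : skDist a b f g < C) :
    ∃ lam ∈ TimeChanges a b, skCost a b f g lam < C := by
  simpa only [skDist_eq_iInf_skCost, iInf_lt_iff, exists_prop] using h

lemma skDist_congr_left {f' : ℝ → E} (h : EqOn f f' (Icc a b)) :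
    skDist a b f g = skDist a b f' g :=
  iInf_congr fun _ => iInf_congr fun hlam =>
    congrArg (max _) <| iSup_congr fun _ => iSup_congr fun ht => by
      rw [h (TimeChanges.mapsTo hlam ht)]

lemma skCost_piecewise_le {lam₁ lam₂ : ℝ → ℝ} (h₁ : lam₁ ∈ TimeChanges a c)
    (h₂ : lam₂ ∈ TimeChanges c b) (hy : EqOn y x (Ico a c)) (hz : EqOn z x (Icc c b)) :
    skCost a b x ((Iio c).piecewise f g) ((Iio c).piecewise lam₁ lam₂) ≤
      max (skCost a c y f lam₁) (skCost c b z g lam₂) := by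
  refine max_le ((gammaTC_piecewise_le h₁ h₂).trans (max_le_max (le_max_left _ _)
    (le_max_left _ _))) (iSup₂_le fun t ht => ?_)
  rcases lt_or_ge t c with htc | hct
  · have ht' : t ∈ Icc a c := ⟨ht.1, htc.le⟩
    have hlam : lam₁ t ∈ Ico a c :=
      ⟨(TimeChanges.mapsTo h₁ ht').1, h₁.2.2.2 ▸ h₁.1 ht' ⟨ht.1.trans htc.le, le_rfl⟩ htc⟩
    rw [piecewise_eqOn (Iio c) f g htc, piecewise_eqOn (Iio c) lam₁ lam₂ htc, ← hy hlam]
    exact le_max_of_le_left (le_max_of_le_right (le_iSup₂_of_le t ht' le_rfl))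
  · have ht' : t ∈ Icc c b := ⟨hct, ht.2⟩
    rw [piecewise_Iio_eqOn_Ici c f g hct, piecewise_Iio_eqOn_Ici c lam₁ lam₂ hct,
      ← hz (TimeChanges.mapsTo h₂ ht')]
    exact le_max_of_le_right (le_max_of_le_right (le_iSup₂_of_le t ht' le_rfl))

lemma skDist_piecewise_le (hac : a ≤ c) (hcb : c ≤ b) (hy : EqOn y x (Ico a c))
    (hz : EqOn z x (Icc c b)) :
    skDist a b x ((Iio c).piecewise f g) ≤ max (skDist a c y f) (skDist c b z g) := by
  refine le_of_forall_gt fun C hC => ?_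
  obtain ⟨lam₁, h₁, hC₁⟩ := exists_skCost_lt (max_lt_iff.1 hC).1
  obtain ⟨lam₂, h₂, hC₂⟩ := exists_skCost_lt (max_lt_iff.1 hC).2
  exact (iInf₂_le _ (TimeChanges.piecewise_mem h₁ h₂ hac hcb)).trans_lt
    ((skCost_piecewise_le h₁ h₂ hy hz).trans_lt (max_lt hC₁ hC₂))

lemma IsRestriction.congr {k : ℝ → E} (h : IsRestriction c d g k) (hfg : EqOn f g (Ico c d)) :
    IsRestriction c d f k :=
  ⟨fun t ht => (h.1 t ht).trans (hfg ht).symm,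
    h.2.congr' (eventuallyEq_nhdsWithin_of_eqOn hfg).symm⟩

lemma IsRestriction.eqOn_Icc (h : IsRestriction c d f g) (hcd : c < d)
    (hf : Tendsto f (𝓝[Ico c d] d) (𝓝 (f d))) : EqOn g f (Icc c d) := by
  intro t ht
  obtain rfl | htd := ht.2.eq_or_lt
  · have := right_nhdsWithin_Ico_neBot hcd
    exact tendsto_nhds_unique h.2 hf
  · exact h.1 t ⟨ht.1, htd⟩

namespace Cadlag

lemma tendsto_nhdsWithin_Ico (hf : Cadlag a b f) (hac : a ≤ c) :
    Tendsto f (𝓝[Ico c b] b) (𝓝 (f b)) :=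
  hf.2.2.mono_left (nhdsWithin_mono _ (Ico_subset_Icc_self.trans (Icc_subset_Icc_left hac)))

lemma isRestriction_self (hf : Cadlag a b f) : IsRestriction a b f f :=
  ⟨fun _ _ => rfl, hf.tendsto_nhdsWithin_Ico le_rfl⟩

lemma update (hf : Cadlag a b f) (hcb : c ≤ b) {L : E}
    (hL : Tendsto f (𝓝[Ico a c] c) (𝓝 L)) : Cadlag a c (Function.update f c L) := by
  have hfL : EqOn f (Function.update f c L) (Iio c) :=
    fun _ hs => (Function.update_of_ne (ne_of_lt hs) _ _).symm
  refine ⟨fun t ht => ?_, fun t ht => ?_, ?_⟩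
  · have hrc := hf.1 t ⟨ht.1, ht.2.trans_le hcb⟩
    rw [nhdsWithin_Ioc_eq_nhdsGT (ht.2.trans_le hcb)] at hrc
    rw [Function.update_of_ne ht.2.ne, nhdsWithin_Ioc_eq_nhdsGT ht.2]
    exact hrc.congr' (hfL.eventuallyEq_of_mem (mem_nhdsWithin_of_mem_nhds (Iio_mem_nhds ht.2)))
  · obtain ⟨M, hM⟩ : ∃ M, Tendsto f (𝓝[Ico a t] t) (𝓝 M) :=
      ht.2.eq_or_lt.elim (fun h => h ▸ ⟨L, hL⟩) fun h => hf.2.1 t ⟨ht.1, h.le.trans hcb⟩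
    exact ⟨M, hM.congr' (eventuallyEq_nhdsWithin_of_eqOn fun s hs => hfL (hs.2.trans_le ht.2))⟩
  · exact continuousWithinAt_update_same.2 (by rwa [Icc_sdiff_right])

lemma piecewise (hf : Cadlag a c f) (hg : Cadlag c b g) (hac : a ≤ c) (hcb : c < b) :
    Cadlag a b ((Iio c).piecewise f g) := by
  have e₁ : EqOn f ((Iio c).piecewise f g) (Iio c) := (piecewise_eqOn _ _ _).symm
  have e₂ : EqOn g ((Iio c).piecewise f g) (Ici c) := (piecewise_Iio_eqOn_Ici c f g).symm
  refine ⟨fun t ht => ?_, fun t ht => ?_, ?_⟩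
  · rcases lt_or_ge t c with htc | hct
    · have hrc := hf.1 t ⟨ht.1, htc⟩
      rw [nhdsWithin_Ioc_eq_nhdsGT htc] at hrc
      rw [← e₁ htc, nhdsWithin_Ioc_eq_nhdsGT ht.2]
      exact hrc.congr' (e₁.eventuallyEq_of_mem (mem_nhdsWithin_of_mem_nhds (Iio_mem_nhds htc)))
    · rw [← e₂ hct]
      exact (hg.1 t ⟨hct, ht.2⟩).congr'
        (eventuallyEq_nhdsWithin_of_eqOn fun s hs => e₂ (hct.trans hs.1.le))
  · rcases le_or_gt t c with htc | hct
    · obtain ⟨M, hM⟩ := hf.2.1 t ⟨ht.1, htc⟩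
      exact ⟨M, hM.congr' (eventuallyEq_nhdsWithin_of_eqOn fun s hs => e₁ (hs.2.trans_le htc))⟩
    · obtain ⟨M, hM⟩ := hg.2.1 t ⟨hct, ht.2⟩
      rw [nhdsWithin_Ico_eq_nhdsLT hct] at hM
      rw [nhdsWithin_Ico_eq_nhdsLT ht.1]
      exact ⟨M, hM.congr' (e₂.eventuallyEq_of_mem (mem_nhdsWithin_of_mem_nhds (Ici_mem_nhds hct)))⟩
  · have hlc := hg.2.2
    rw [nhdsWithin_Icc_eq_nhdsLE hcb] at hlc
    rw [← e₂ hcb.le, nhdsWithin_Icc_eq_nhdsLE (hac.trans_lt hcb)]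
    exact hlc.congr' (e₂.eventuallyEq_of_mem (mem_nhdsWithin_of_mem_nhds (Ici_mem_nhds hcb)))

end Cadlag

end Skorohod

section Compactness

variable {A B : Set (ℝ → E)}

def restrictionSet (c d : ℝ) (K : Set (ℝ → E)) : Set (ℝ → E) :=
  {f | Cadlag c d f ∧ ∃ g ∈ K, IsRestriction c d f g}

def gluedSet (a c b : ℝ) (A B : Set (ℝ → E)) : Set (ℝ → E) :=
  {f | Cadlag a b f ∧ (∃ g ∈ A, IsRestriction a c f g) ∧ ∃ h ∈ B, IsRestriction c b f h}

def partitionSet (u : ℕ → ℝ) (K : ℕ → Set (ℝ → E)) (l : ℕ) : Set (ℝ → E) :=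
  {f | Cadlag (u 0) (u l) f ∧ ∀ i < l, ∃ g ∈ K i, IsRestriction (u i) (u (i + 1)) f g}

theorem SkCompact.restrictionSet (hK : SkCompact c d A) (hcd : c < d) :
    SkCompact c d (restrictionSet c d A) := by
  refine ⟨fun f hf => hf.1, fun x hx => ?_⟩
  choose g hgA hxg using fun n => (hx n).2
  obtain ⟨f, hfA, φ, hφ, hlim⟩ := hK.2 g hgA
  have hf := hK.1 f hfA
  refine ⟨f, ⟨hf, f, hfA, hf.isRestriction_self⟩, φ, hφ, ?_⟩
  have hdist : ∀ n, skDist c d (x (φ n)) f = skDist c d (g (φ n)) f := fun n =>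
    skDist_congr_left ((hxg (φ n)).eqOn_Icc hcd
      ((hx (φ n)).1.tendsto_nhdsWithin_Ico le_rfl)).symm
  simpa only [hdist] using hlim

theorem SkCompact.gluedSet (hA : SkCompact a c A) (hB : SkCompact c b B) (hac : a ≤ c)
    (hcb : c < b) : SkCompact a b (gluedSet a c b A B) := by
  refine ⟨fun f hf => hf.1, fun x hx => ?_⟩
  choose y hyA hxy using fun n => (hx n).2.1
  choose z hzB hxz using fun n => (hx n).2.2
  obtain ⟨f, hfA, φ, hφ, hy⟩ := hA.2 y hyA
  obtain ⟨g, hgB, ψ, hψ, hz⟩ := hB.2 (z ∘ φ) fun n => hzB (φ n)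
  have hf := hA.1 f hfA
  have hg := hB.1 g hgB
  refine ⟨(Iio c).piecewise f g, ⟨hf.piecewise hg hac hcb,
      ⟨f, hfA, hf.isRestriction_self.congr ((piecewise_eqOn _ _ _).mono fun _ ht => ht.2)⟩,
      ⟨g, hgB,
        hg.isRestriction_self.congr ((piecewise_Iio_eqOn_Ici c f g).mono fun _ ht => ht.1)⟩⟩,
    φ ∘ ψ, hφ.comp hψ, ?_⟩
  have hmax := (hy.comp hψ.tendsto_atTop).max hz
  rw [max_self] at hmax
  refine tendsto_of_tendsto_of_tendsto_of_le_of_le tendsto_const_nhds hmax (fun _ => zero_le)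
    fun n => skDist_piecewise_le hac hcb.le (hxy _).1 ((hxz _).eqOn_Icc hcb
      ((hx _).1.tendsto_nhdsWithin_Ico hac))

lemma partitionSet_one (u : ℕ → ℝ) (K : ℕ → Set (ℝ → E)) :
    partitionSet u K 1 = restrictionSet (u 0) (u 1) (K 0) := by
  simp [partitionSet, restrictionSet]

lemma partitionSet_succ {u : ℕ → ℝ} (K : ℕ → Set (ℝ → E)) {l : ℕ} (hl : 0 < l)
    (hu : StrictMonoOn u (Iic (l + 1))) :
    partitionSet u K (l + 1) =
      gluedSet (u 0) (u l) (u (l + 1)) (partitionSet u K l) (K l) := by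
  have hsub : ∀ i < l, Ico (u i) (u (i + 1)) ⊆ Ico (u 0) (u l) := fun i hi =>
    Ico_subset_Ico (hu.monotoneOn (by simp) (mem_Iic.2 (by omega)) (Nat.zero_le i))
      (hu.monotoneOn (mem_Iic.2 (by omega)) (by simp) hi)
  have h0l : u 0 < u l := hu (by simp) (by simp) hl
  have hll : u l < u (l + 1) := hu (by simp) self_mem_Iic (Nat.lt_succ_self l)
  ext f
  constructor
  · rintro ⟨hf, hres⟩
    obtain ⟨L, hL⟩ := hf.2.1 (u l) ⟨h0l, hll.le⟩
    have hfL : EqOn (Function.update f (u l) L) f (Ico (u 0) (u l)) :=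
      fun t ht => Function.update_of_ne ht.2.ne _ _
    refine ⟨hf, ⟨Function.update f (u l) L, ⟨hf.update hll.le hL, fun i hi => ?_⟩,
      hfL, by rwa [Function.update_self]⟩, hres l (Nat.lt_succ_self l)⟩
    obtain ⟨g, hg, hfg⟩ := hres i (by omega)
    exact ⟨g, hg, hfg.congr (hfL.mono (hsub i hi))⟩
  · rintro ⟨hf, ⟨g, ⟨-, hgK⟩, hfg⟩, hfK⟩
    refine ⟨hf, fun i hi => ?_⟩
    obtain hi | rfl := Nat.lt_succ_iff_lt_or_eq.1 hi
    · obtain ⟨k, hk, hgk⟩ := hgK i hi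
      exact ⟨k, hk, hgk.congr (fun t ht => (hfg.1 t (hsub i hi ht)).symm)⟩
    · exact hfK

theorem SkCompact.partitionSet {u : ℕ → ℝ} {K : ℕ → Set (ℝ → E)} {l : ℕ} (hl : 0 < l)
    (hu : StrictMonoOn u (Iic l)) (hK : ∀ i < l, SkCompact (u i) (u (i + 1)) (K i)) :
    SkCompact (u 0) (u l) (partitionSet u K l) := by
  induction l, hl using Nat.le_induction with
  | base =>
    rw [partitionSet_one]
    exact (hK 0 one_pos).restrictionSet (hu (by simp) (by simp) one_pos)
  | succ l hl ih =>
    rw [partitionSet_succ K hl hu]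
    exact (ih (hu.mono (Iic_subset_Iic.2 l.le_succ)) fun i hi => hK i (by omega)).gluedSet
      (hK l (Nat.lt_succ_self l)) (hu.monotoneOn (by simp) (by simp) l.zero_le)
      (hu (by simp) self_mem_Iic (Nat.lt_succ_self l))

end Compactness

theorem stmt16_general
    (a b : ℝ) (l : ℕ) (hl : 0 < l) (u : ℕ → ℝ)
    (hu0 : u 0 = a) (hul : u l = b) (humono : ∀ i < l, u i < u (i + 1))
    (K : ℕ → Set (ℝ → E)) (hK : ∀ i < l, SkCompact (u i) (u (i + 1)) (K i)) :
    SkCompact a b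
      {f | Cadlag a b f ∧
        ∀ i < l, ∃ g ∈ K i, IsRestriction (u i) (u (i + 1)) f g} := by
  subst hu0 hul
  exact SkCompact.partitionSet hl (strictMonoOn_Iic_of_lt_succ humono) hK

/-- if `K i` is compact in `D([u_{i-1}, u_i], E)` for each interval of a
finite partition `a = u₀ < … < u_l = b`, then
`K = {f ∈ D([a,b],E) : f^{[u_{i-1},u_i]} ∈ K_i ∀ i}` is compact in `D([a,b], E)`. -/
theorem stmt16 [CompleteSpace E] [TopologicalSpace.SeparableSpace E]
    (a b : ℝ) (hab : a < b) (l : ℕ) (hl : 0 < l) (u : ℕ → ℝ)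
    (hu0 : u 0 = a) (hul : u l = b) (humono : ∀ i < l, u i < u (i + 1))
    (K : ℕ → Set (ℝ → E)) (hK : ∀ i < l, SkCompact (u i) (u (i + 1)) (K i)) :
    SkCompact a b
      {f | Cadlag a b f ∧
        ∀ i < l, ∃ g ∈ K i, IsRestriction (u i) (u (i + 1)) f g} :=
  stmt16_general a b l hl u hu0 hul humono K hK
end
end
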